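/- arXiv:2204.07487 — 12 statements merged into one kernel-verified Lean document; each statement's English description precedes it below -/
import Mathlib

section
/- Let (Ω, ℱ) be a measurable space, μ a positive, σ-finite, countably additive measure on (Ω, ℱ), and 𝒢 ⊆ ℱ a nonempty family of measurable sets closed under countable unions. Then there exist a set Ḡ ∈ 𝒢 and (countably additive, positive) measures μ₁ and μ₂ on (Ω, ℱ) such that μ = μ₁ + μ₂, μ₁(Ḡᶜ) = 0, and μ₂(G) = 0 for every G ∈ 𝒢. Moreover the decomposition is unique: if also μ = ν₁ + ν₂ with ν₁(G'ᶜ) = 0 for some G' ∈ 𝒢 and ν₂(G) = 0 for every G ∈ 𝒢, then ν₁ = μ₁ and ν₂ = μ₂. -/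
open MeasureTheory
open scoped ENNReal

theorem dellacherie_decomposition
    {Ω : Type*} [MeasurableSpace Ω] (μ : Measure Ω) [SigmaFinite μ]
    (𝒢 : Set (Set Ω)) (h𝒢meas : ∀ G ∈ 𝒢, MeasurableSet G) (h𝒢ne : 𝒢.Nonempty)
    (h𝒢union : ∀ G : ℕ → Set Ω, (∀ n, G n ∈ 𝒢) → (⋃ n, G n) ∈ 𝒢) :
    ∃ Gbar ∈ 𝒢, ∃ μ₁ μ₂ : Measure Ω,
      μ = μ₁ + μ₂ ∧ μ₁ Gbarᶜ = 0 ∧ (∀ G ∈ 𝒢, μ₂ G = 0) ∧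
      ∀ ν₁ ν₂ : Measure Ω, μ = ν₁ + ν₂ → (∃ G' ∈ 𝒢, ν₁ G'ᶜ = 0) →
        (∀ G ∈ 𝒢, ν₂ G = 0) → ν₁ = μ₁ ∧ ν₂ = μ₂ := by
  classical
  set ν : Measure Ω := μ.toFinite with hν
  have hac : μ ≪ ν := absolutelyContinuous_toFinite μ
  -- union of two sets of 𝒢 is in 𝒢
  have hunion2 : ∀ A ∈ 𝒢, ∀ B ∈ 𝒢, A ∪ B ∈ 𝒢 := by
    intro A hA B hB
    have := h𝒢union (fun n => if n = 0 then A else B) (by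
      intro n; by_cases h : n = 0 <;> simp [h, hA, hB])
    convert this using 1
    ext x
    simp only [Set.mem_union, Set.mem_iUnion]
    constructor
    · rintro (h | h)
      · exact ⟨0, by simp [h]⟩
      · exact ⟨1, by simp [h]⟩
    · rintro ⟨n, hn⟩
      by_cases h : n = 0
      · left; simpa [h] using hn
      · right; simpa [h] using hn
  set S : Set ℝ≥0∞ := ν '' 𝒢 with hS
  have hSne : S.Nonempty := h𝒢ne.image ν
  have hSbdd : BddAbove S := ⟨ν Set.univ, by rintro x ⟨G, _, rfl⟩; exact measure_mono (Set.subset_univ _)⟩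
  obtain ⟨u, humono, hutend, huS⟩ := exists_seq_tendsto_sSup hSne hSbdd
  choose G hG hGu using huS
  set Gbar : Set Ω := ⋃ n, G n with hGbar
  have hGbar𝒢 : Gbar ∈ 𝒢 := h𝒢union G hG
  have hle : ∀ A ∈ 𝒢, ν A ≤ sSup S := fun A hA => le_csSup hSbdd ⟨A, hA, rfl⟩
  have hGbarSup : ν Gbar = sSup S := by
    refine le_antisymm (hle _ hGbar𝒢) ?_
    refine le_of_tendsto hutend (Filter.Eventually.of_forall fun n => ?_)
    rw [← hGu n]
    exact measure_mono (Set.subset_iUnion G n)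
  have hGbarfin : ν Gbar ≠ ⊤ := measure_ne_top ν Gbar
  -- key: every G ∈ 𝒢 is ν-a.e. contained in Gbar
  have hkey : ∀ A ∈ 𝒢, μ (A \ Gbar) = 0 := by
    intro A hA
    refine hac ?_
    have h1 : ν (A ∪ Gbar) ≤ ν Gbar := hGbarSup ▸ hle _ (hunion2 A hA Gbar hGbar𝒢)
    have h2 : ν (A ∪ Gbar) = ν (A \ Gbar) + ν Gbar := by
      rw [← measure_union (Set.disjoint_sdiff_left (s := Gbar) (t := A))
        (h𝒢meas _ hGbar𝒢)]
      congr 1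
      rw [Set.diff_union_self]
    have : ν (A \ Gbar) + ν Gbar ≤ ν Gbar := h2 ▸ h1
    have h3 : ν (A \ Gbar) + ν Gbar ≤ 0 + ν Gbar := by simpa using this
    simpa using ENNReal.le_of_add_le_add_right hGbarfin h3
  have hGbarmeas : MeasurableSet Gbar := h𝒢meas _ hGbar𝒢
  refine ⟨Gbar, hGbar𝒢, μ.restrict Gbar, μ.restrict Gbarᶜ, ?_, ?_, ?_, ?_⟩
  · exact (Measure.restrict_add_restrict_compl hGbarmeas).symm
  · rw [Measure.restrict_apply hGbarmeas.compl]
    simp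
  · intro A hA
    rw [Measure.restrict_apply (h𝒢meas _ hA)]
    rw [← Set.diff_eq]
    exact hkey A hA
  · rintro ν₁ ν₂ hsum ⟨G', hG'𝒢, hG'null⟩ hν₂null
    set H : Set Ω := G' ∪ Gbar with hH
    have hH𝒢 : H ∈ 𝒢 := hunion2 _ hG'𝒢 _ hGbar𝒢
    have hHmeas : MeasurableSet H := h𝒢meas _ hH𝒢
    -- facts about null sets
    have hν₂H : ν₂ H = 0 := hν₂null _ hH𝒢
    have hμHc : μ (H \ Gbar) = 0 := by
      have := hkey H hH𝒢
      simpa using this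
    have hν₁Hc : ∀ A : Set Ω, ν₁ (A \ H) = 0 := fun A =>
      measure_mono_null (fun x hx => by
        simp only [Set.mem_diff, hH, Set.mem_union, not_or] at hx
        exact fun h => hx.2.1 h) hG'null
    constructor <;> ext A hAmeas
    · -- ν₁ A = μ.restrict Gbar A
      have h1 : ν₁ A = ν₁ (A ∩ H) := by
        rw [← measure_inter_add_diff A hHmeas, hν₁Hc A, add_zero]
      have h2 : ν₁ (A ∩ H) = μ (A ∩ H) := by
        have := congrArg (fun m => m (A ∩ H)) hsum
        simp only [Measure.add_apply] at this
        have hz : ν₂ (A ∩ H) = 0 := measure_mono_null Set.inter_subset_right hν₂H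
        rw [this, hz, add_zero]
      have h3 : μ (A ∩ H) = μ (A ∩ Gbar) := by
        conv_lhs => rw [show A ∩ H = (A ∩ Gbar) ∪ (A ∩ (H \ Gbar)) by
          rw [← Set.inter_union_distrib_left]
          congr 1
          simp [hH, Set.union_diff_self]
          rw [Set.union_comm]]
        refine le_antisymm ?_ (measure_mono Set.subset_union_left)
        calc μ ((A ∩ Gbar) ∪ (A ∩ (H \ Gbar))) ≤ μ (A ∩ Gbar) + μ (A ∩ (H \ Gbar)) :=
              measure_union_le _ _
          _ = μ (A ∩ Gbar) := by
              rw [measure_mono_null Set.inter_subset_right hμHc, add_zero]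
      rw [h1, h2, h3, Measure.restrict_apply hAmeas]
    · -- ν₂ A = μ.restrict Gbarᶜ A
      have h1 : ν₂ A = ν₂ (A \ H) := by
        rw [← measure_inter_add_diff A hHmeas,
          measure_mono_null Set.inter_subset_right hν₂H, zero_add]
      have h2 : ν₂ (A \ H) = μ (A \ H) := by
        have := congrArg (fun m => m (A \ H)) hsum
        simp only [Measure.add_apply] at this
        rw [this, hν₁Hc A, zero_add]
      have h3 : μ (A \ H) = μ (A ∩ Gbarᶜ) := by
        have hsub : A \ H ⊆ A ∩ Gbarᶜ := fun x hx =>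
          ⟨hx.1, fun h => hx.2 (Set.mem_union_right _ h)⟩
        refine le_antisymm (measure_mono hsub) ?_
        have : A ∩ Gbarᶜ ⊆ (A \ H) ∪ (H \ Gbar) := by
          intro x hx
          by_cases h : x ∈ H
          · exact Or.inr ⟨h, hx.2⟩
          · exact Or.inl ⟨hx.1, h⟩
        calc μ (A ∩ Gbarᶜ) ≤ μ ((A \ H) ∪ (H \ Gbar)) := measure_mono this
          _ ≤ μ (A \ H) + μ (H \ Gbar) := measure_union_le _ _
          _ = μ (A \ H) := by rw [hμHc, add_zero]
      rw [h1, h2, h3, Measure.restrict_apply hAmeas]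
end

section
/- Let (Ω, ℱ) be a measurable space, μ a finitely additive positive set function on ℱ (μ : ℱ → [0, ∞] with μ(∅) = 0 and μ(A ∪ B) = μ(A) + μ(B) for all disjoint A, B ∈ ℱ), and 𝒢 ⊆ ℱ any family of measurable sets. Then the following are equivalent: (a) there exists G_μ ∈ 𝒢 such that μ(G \ G_μ) = 0 for every G ∈ 𝒢; (b) there exist Ḡ ∈ 𝒢 and finitely additive positive set functions μ₁, μ₂ on ℱ such that μ = μ₁ + μ₂, μ₁(Ḡᶜ) = 0, and μ₂(G) = 0 for every G ∈ 𝒢. Moreover, if these hold then μ((G_μ \ Ḡ) ∪ (Ḡ \ G_μ)) = 0, and necessarily μ₁(F) = μ(F ∩ G_μ) and μ₂(F) = μ(F ∩ G_μᶜ) for every F ∈ ℱ; in particular μ₁ and μ₂ are unique. -/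
open MeasureTheory
open scoped ENNReal

/-- A finitely additive positive set function on a measurable space: it vanishes on `∅`
and is additive on disjoint pairs of measurable sets. -/
def IsFinitelyAdditive {Ω : Type*} [MeasurableSpace Ω] (μ : Set Ω → ℝ≥0∞) : Prop :=
  μ ∅ = 0 ∧ ∀ A B : Set Ω, MeasurableSet A → MeasurableSet B → Disjoint A B →
    μ (A ∪ B) = μ A + μ B

lemma isFinitelyAdditive_mono_zero {Ω : Type*} [MeasurableSpace Ω] {ν : Set Ω → ℝ≥0∞}
    (hν : IsFinitelyAdditive ν) {A B : Set Ω} (hA : MeasurableSet A) (hB : MeasurableSet B)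
    (hAB : A ⊆ B) (h : ν B = 0) : ν A = 0 := by
  have key : ν B = ν A + ν (B \ A) := by
    rw [← hν.2 A (B \ A) hA (hB.diff hA) disjoint_sdiff_self_right,
      Set.union_diff_cancel hAB]
  rw [h] at key
  exact (add_eq_zero.mp key.symm).1

theorem dellacherie_finitely_additive
    {Ω : Type*} [MeasurableSpace Ω] (μ : Set Ω → ℝ≥0∞) (hμ : IsFinitelyAdditive μ)
    (𝒢 : Set (Set Ω)) (h𝒢meas : ∀ G ∈ 𝒢, MeasurableSet G) :
    ((∃ Gμ ∈ 𝒢, ∀ G ∈ 𝒢, μ (G \ Gμ) = 0) ↔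
      (∃ Gbar ∈ 𝒢, ∃ μ₁ μ₂ : Set Ω → ℝ≥0∞,
        IsFinitelyAdditive μ₁ ∧ IsFinitelyAdditive μ₂ ∧
        (∀ F : Set Ω, MeasurableSet F → μ F = μ₁ F + μ₂ F) ∧
        μ₁ Gbarᶜ = 0 ∧ (∀ G ∈ 𝒢, μ₂ G = 0))) ∧
    (∀ Gμ ∈ 𝒢, (∀ G ∈ 𝒢, μ (G \ Gμ) = 0) →
      ∀ Gbar ∈ 𝒢, ∀ μ₁ μ₂ : Set Ω → ℝ≥0∞,
        IsFinitelyAdditive μ₁ → IsFinitelyAdditive μ₂ →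
        (∀ F : Set Ω, MeasurableSet F → μ F = μ₁ F + μ₂ F) →
        μ₁ Gbarᶜ = 0 → (∀ G ∈ 𝒢, μ₂ G = 0) →
          μ ((Gμ \ Gbar) ∪ (Gbar \ Gμ)) = 0 ∧
          ∀ F : Set Ω, MeasurableSet F → μ₁ F = μ (F ∩ Gμ) ∧ μ₂ F = μ (F ∩ Gμᶜ)) := by
  constructor
  · constructor
    · rintro ⟨Gμ, hGμ, hnull⟩
      have hGμm : MeasurableSet Gμ := h𝒢meas Gμ hGμ
      refine ⟨Gμ, hGμ, fun F => μ (F ∩ Gμ), fun F => μ (F ∩ Gμᶜ), ?_, ?_, ?_, ?_, ?_⟩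
      · refine ⟨by simp [hμ.1], fun A B hA hB hd => ?_⟩
        dsimp only
        rw [Set.union_inter_distrib_right]
        exact hμ.2 _ _ (hA.inter hGμm) (hB.inter hGμm)
          (hd.mono Set.inter_subset_left Set.inter_subset_left)
      · refine ⟨by simp [hμ.1], fun A B hA hB hd => ?_⟩
        dsimp only
        rw [Set.union_inter_distrib_right]
        exact hμ.2 _ _ (hA.inter hGμm.compl) (hB.inter hGμm.compl)
          (hd.mono Set.inter_subset_left Set.inter_subset_left)
      · intro F hF
        rw [← hμ.2 _ _ (hF.inter hGμm) (hF.inter hGμm.compl)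
          ((disjoint_compl_right).mono Set.inter_subset_right Set.inter_subset_right)]
        congr 1
        rw [← Set.inter_union_distrib_left, Set.union_compl_self, Set.inter_univ]
      · simp [hμ.1]
      · intro G hG
        have := hnull G hG
        rwa [Set.diff_eq] at this
    · rintro ⟨Gbar, hGbar, μ₁, μ₂, hμ₁, hμ₂, hsum, h₁c, h₂G⟩
      refine ⟨Gbar, hGbar, fun G hG => ?_⟩
      have hGm := h𝒢meas G hG
      have hGbm := h𝒢meas Gbar hGbar
      have hd : MeasurableSet (G \ Gbar) := hGm.diff hGbm
      have h1 : μ₁ (G \ Gbar) = 0 :=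
        isFinitelyAdditive_mono_zero hμ₁ hd hGbm.compl (Set.diff_subset_compl G Gbar) h₁c
      have h2 : μ₂ (G \ Gbar) = 0 :=
        isFinitelyAdditive_mono_zero hμ₂ hd hGm Set.diff_subset (h₂G G hG)
      rw [hsum _ hd, h1, h2, add_zero]
  · intro Gμ hGμ hnull Gbar hGbar μ₁ μ₂ hμ₁ hμ₂ hsum h₁c h₂G
    have hGμm : MeasurableSet Gμ := h𝒢meas Gμ hGμ
    have hGbm : MeasurableSet Gbar := h𝒢meas Gbar hGbar
    -- μ (Gμ \ Gbar) = 0 from the decomposition side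
    have hμGb : μ (Gμ \ Gbar) = 0 := by
      have hd : MeasurableSet (Gμ \ Gbar) := hGμm.diff hGbm
      have h1 : μ₁ (Gμ \ Gbar) = 0 :=
        isFinitelyAdditive_mono_zero hμ₁ hd hGbm.compl (Set.diff_subset_compl Gμ Gbar) h₁c
      have h2 : μ₂ (Gμ \ Gbar) = 0 :=
        isFinitelyAdditive_mono_zero hμ₂ hd hGμm Set.diff_subset (h₂G Gμ hGμ)
      rw [hsum _ hd, h1, h2, add_zero]
    have hμbG : μ (Gbar \ Gμ) = 0 := hnull Gbar hGbar
    have hsym : μ ((Gμ \ Gbar) ∪ (Gbar \ Gμ)) = 0 := by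
      rw [hμ.2 _ _ (hGμm.diff hGbm) (hGbm.diff hGμm)
        (disjoint_sdiff_sdiff), hμGb, hμbG, add_zero]
    refine ⟨hsym, fun F hF => ?_⟩
    -- μ₂ Gμ = 0, μ₁ Gμᶜ = 0
    have hμ₂Gμ : μ₂ Gμ = 0 := h₂G Gμ hGμ
    have hμ₁c : μ₁ Gμᶜ = 0 := by
      have e : Gμᶜ = (Gbar \ Gμ) ∪ (Gμᶜ ∩ Gbarᶜ) := by
        rw [Set.diff_eq]
        ext x; simp; tauto
      rw [e, hμ₁.2 _ _ (hGbm.diff hGμm) (hGμm.compl.inter hGbm.compl)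
        (Disjoint.mono Set.diff_subset Set.inter_subset_right disjoint_compl_right)]
      have h1 : μ₁ (Gbar \ Gμ) = 0 :=
        isFinitelyAdditive_mono_zero hμ₁ (hGbm.diff hGμm) (hGbm.diff hGμm)
          subset_rfl (by
            have := hsum _ (hGbm.diff hGμm)
            rw [hμbG] at this
            exact (add_eq_zero.mp this.symm).1)
      have h2 : μ₁ (Gμᶜ ∩ Gbarᶜ) = 0 :=
        isFinitelyAdditive_mono_zero hμ₁ (hGμm.compl.inter hGbm.compl) hGbm.compl
          Set.inter_subset_right h₁c
      rw [h1, h2, add_zero]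
    constructor
    · have e1 : μ₁ F = μ₁ (F ∩ Gμ) := by
        have : μ₁ F = μ₁ (F ∩ Gμ) + μ₁ (F ∩ Gμᶜ) := by
          rw [← hμ₁.2 _ _ (hF.inter hGμm) (hF.inter hGμm.compl)
            ((disjoint_compl_right).mono Set.inter_subset_right Set.inter_subset_right)]
          congr 1
          rw [← Set.inter_union_distrib_left, Set.union_compl_self, Set.inter_univ]
        rw [this, isFinitelyAdditive_mono_zero hμ₁ (hF.inter hGμm.compl) hGμm.compl
          Set.inter_subset_right hμ₁c, add_zero]
      have e2 : μ (F ∩ Gμ) = μ₁ (F ∩ Gμ) := by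
        rw [hsum _ (hF.inter hGμm),
          isFinitelyAdditive_mono_zero hμ₂ (hF.inter hGμm) hGμm
            Set.inter_subset_right hμ₂Gμ, add_zero]
      rw [e1, e2]
    · have e1 : μ₂ F = μ₂ (F ∩ Gμᶜ) := by
        have : μ₂ F = μ₂ (F ∩ Gμ) + μ₂ (F ∩ Gμᶜ) := by
          rw [← hμ₂.2 _ _ (hF.inter hGμm) (hF.inter hGμm.compl)
            ((disjoint_compl_right).mono Set.inter_subset_right Set.inter_subset_right)]
          congr 1
          rw [← Set.inter_union_distrib_left, Set.union_compl_self, Set.inter_univ]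
        rw [this, isFinitelyAdditive_mono_zero hμ₂ (hF.inter hGμm) hGμm
          Set.inter_subset_right hμ₂Gμ, zero_add]
      have e2 : μ (F ∩ Gμᶜ) = μ₂ (F ∩ Gμᶜ) := by
        rw [hsum _ (hF.inter hGμm.compl),
          isFinitelyAdditive_mono_zero hμ₁ (hF.inter hGμm.compl) hGμm.compl
            Set.inter_subset_right hμ₁c, zero_add]
      rw [e1, e2]
end

section
/- Let μ be a positive, σ-finite, countably additive measure on a measurable space (Ω, ℱ). Then there exist measures μᵃ and μᵈ on (Ω, ℱ) such that μ = μᵃ + μᵈ, μᵃ is purely atomic (every measurable set F with μᵃ(F) > 0 contains an atom of μᵃ), and μᵈ is diffuse (μᵈ has no atoms). Moreover this decomposition is unique: if μ = νᵃ + νᵈ with νᵃ purely atomic and νᵈ diffuse, then νᵃ = μᵃ and νᵈ = μᵈ. -/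
open MeasureTheory
open scoped ENNReal

/-- `A` is an atom of the measure `ν`: it is measurable, of strictly positive measure,
and every measurable subset of it has measure `0` or measure `ν A`. -/
def IsAtomOfMeasure {Ω : Type*} [MeasurableSpace Ω] (ν : Measure Ω) (A : Set Ω) : Prop :=
  MeasurableSet A ∧ 0 < ν A ∧ ∀ B ⊆ A, MeasurableSet B → ν B = 0 ∨ ν B = ν A

/-- A measure is purely atomic if every measurable set of strictly positive measure
contains an atom. -/
def IsPurelyAtomicMeasure {Ω : Type*} [MeasurableSpace Ω] (ν : Measure Ω) : Prop :=
  ∀ F : Set Ω, MeasurableSet F → 0 < ν F → ∃ A ⊆ F, IsAtomOfMeasure ν A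

/-- A measure is diffuse (non-atomic) if it has no atoms. -/
def IsDiffuseMeasure {Ω : Type*} [MeasurableSpace Ω] (ν : Measure Ω) : Prop :=
  ∀ A : Set Ω, ¬ IsAtomOfMeasure ν A

lemma exists_spanning_pos {Ω : Type*} [MeasurableSpace Ω] (μ ν : Measure Ω)
    [SigmaFinite μ] {A : Set Ω} (h : 0 < ν A) :
    ∃ n, 0 < ν (A ∩ spanningSets μ n) := by
  have hsup : ν A = ⨆ n, ν (A ∩ spanningSets μ n) := by
    rw [← Directed.measure_iUnion]
    · rw [← Set.inter_iUnion, iUnion_spanningSets, Set.inter_univ]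
    · exact Monotone.directed_le fun i j hij =>
        Set.inter_subset_inter_right _ (monotone_spanningSets μ hij)
  rw [hsup] at h
  by_contra hc
  push_neg at hc
  simp only [nonpos_iff_eq_zero] at hc
  simp [hc] at h

lemma exists_finite_subset_of_atom {Ω : Type*} [MeasurableSpace Ω] (μ ν : Measure Ω)
    [SigmaFinite μ] (hle : ∀ s, ν s ≤ μ s) {A : Set Ω} (hA : IsAtomOfMeasure ν A) :
    ∃ B, B ⊆ A ∧ MeasurableSet B ∧ ν B = ν A ∧ μ B < ⊤ := by
  obtain ⟨hAm, hApos, hAatom⟩ := hA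
  obtain ⟨n, hn⟩ := exists_spanning_pos μ ν hApos
  have hm : MeasurableSet (A ∩ spanningSets μ n) :=
    hAm.inter (measurableSet_spanningSets μ n)
  refine ⟨A ∩ spanningSets μ n, Set.inter_subset_left, hm, ?_, ?_⟩
  · rcases hAatom _ Set.inter_subset_left hm with h | h
    · exact absurd h hn.ne'
    · exact h
  · exact lt_of_le_of_lt (measure_mono Set.inter_subset_right)
      (measure_spanningSets_lt_top μ n)

theorem atomic_diffuse_decomposition
    {Ω : Type*} [MeasurableSpace Ω] (μ : Measure Ω) [SigmaFinite μ] :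
    ∃ μa μd : Measure Ω,
      μ = μa + μd ∧ IsPurelyAtomicMeasure μa ∧ IsDiffuseMeasure μd ∧
      ∀ νa νd : Measure Ω, μ = νa + νd → IsPurelyAtomicMeasure νa → IsDiffuseMeasure νd →
        νa = μa ∧ νd = μd := by
  classical
  -- a maximal pairwise-disjoint family of atoms of μ
  obtain ⟨S, hSmax⟩ := zorn_subset
      {S : Set (Set Ω) | (∀ A ∈ S, IsAtomOfMeasure μ A) ∧ S.PairwiseDisjoint id}
      (by
        intro c hc hchain
        refine ⟨⋃₀ c, ⟨?_, ?_⟩, fun s hs => Set.subset_sUnion_of_mem hs⟩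
        · rintro A ⟨t, htc, hAt⟩
          exact (hc htc).1 A hAt
        · rintro A ⟨t, htc, hAt⟩ B ⟨u, huc, hBu⟩ hAB
          rcases hchain.total htc huc with h | h
          · exact (hc huc).2 (h hAt) hBu hAB
          · exact (hc htc).2 hAt (h hBu) hAB)
  have hS : (∀ A ∈ S, IsAtomOfMeasure μ A) ∧ S.PairwiseDisjoint id := hSmax.1
  -- S is countable
  have hSfin : ∀ n k : ℕ,
      {A ∈ S | ((k : ℝ≥0∞) + 1)⁻¹ ≤ μ (A ∩ spanningSets μ n)}.Finite := by
    intro n k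
    by_contra hinf
    set e := Set.Infinite.natEmbedding _ hinf with he
    have hdisj : Pairwise (Function.onFun Disjoint
        fun i : ℕ => ((e i : Set Ω) ∩ spanningSets μ n)) := by
      intro i j hij
      have hne : (e i : Set Ω) ≠ (e j : Set Ω) := by
        intro h
        exact hij (e.injective (Subtype.ext h))
      exact ((hS.2 (e i).2.1 (e j).2.1 hne).mono
        Set.inter_subset_left Set.inter_subset_left)
    have hmeas : ∀ i : ℕ, MeasurableSet ((e i : Set Ω) ∩ spanningSets μ n) :=
      fun i => (hS.1 _ (e i).2.1).1.inter (measurableSet_spanningSets μ n)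
    have htop : μ (⋃ i, (e i : Set Ω) ∩ spanningSets μ n) = ⊤ := by
      rw [measure_iUnion hdisj hmeas]
      refine top_le_iff.mp ?_
      calc (⊤ : ℝ≥0∞) = ∑' _ : ℕ, ((k : ℝ≥0∞) + 1)⁻¹ :=
            (ENNReal.tsum_const_eq_top_of_ne_zero (by simp)).symm
        _ ≤ _ := ENNReal.tsum_le_tsum fun i => (e i).2.2
    have hlt : μ (⋃ i, (e i : Set Ω) ∩ spanningSets μ n) < ⊤ :=
      lt_of_le_of_lt (measure_mono (Set.iUnion_subset fun i => Set.inter_subset_right))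
        (measure_spanningSets_lt_top μ n)
    exact hlt.ne htop
  have hScount : S.Countable := by
    have hsub : S ⊆ ⋃ (n : ℕ) (k : ℕ),
        {A ∈ S | ((k : ℝ≥0∞) + 1)⁻¹ ≤ μ (A ∩ spanningSets μ n)} := by
      intro A hA
      obtain ⟨n, hn⟩ := exists_spanning_pos μ μ (hS.1 A hA).2.1
      obtain ⟨k, hk⟩ := ENNReal.exists_inv_nat_lt hn.ne'
      have hk' : ((k : ℝ≥0∞) + 1)⁻¹ ≤ μ (A ∩ spanningSets μ n) :=
        le_trans (by gcongr; simp) hk.le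
      exact Set.mem_iUnion.mpr ⟨n, Set.mem_iUnion.mpr ⟨k, hA, hk'⟩⟩
    exact ((Set.countable_iUnion fun n =>
      Set.countable_iUnion fun k => (hSfin n k).countable).mono hsub)
  set U : Set Ω := ⋃₀ S with hUdef
  have hUm : MeasurableSet U :=
    MeasurableSet.sUnion hScount fun A hA => (hS.1 A hA).1
  -- no atom of μ lies inside Uᶜ
  have hno : ∀ B : Set Ω, B ⊆ Uᶜ → ¬ IsAtomOfMeasure μ B := by
    intro B hBU hB
    have hdBA : ∀ A ∈ S, Disjoint B A := fun A hA =>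
      Set.disjoint_left.mpr fun x hxB hxA => hBU hxB (Set.subset_sUnion_of_mem hA hxA)
    have hBS : B ∉ S := by
      intro h
      obtain ⟨x, hx⟩ := nonempty_of_measure_ne_zero hB.2.1.ne'
      exact hBU hx (Set.subset_sUnion_of_mem h hx)
    have hins : insert B S ∈
        {S : Set (Set Ω) | (∀ A ∈ S, IsAtomOfMeasure μ A) ∧ S.PairwiseDisjoint id} := by
      constructor
      · rintro A (rfl | hA)
        · exact hB
        · exact hS.1 A hA
      · intro x hx y hy hxy
        rcases hx with rfl | hx <;> rcases hy with rfl | hy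
        · exact absurd rfl hxy
        · exact hdBA y hy
        · exact (hdBA x hx).symm
        · exact hS.2 hx hy hxy
    exact hBS (hSmax.2 hins (Set.subset_insert B S) (Set.mem_insert B S))
  refine ⟨μ.restrict U, μ.restrict Uᶜ, (Measure.restrict_add_restrict_compl hUm).symm,
    ?_, ?_, ?_⟩
  · -- purely atomic
    intro F hF hpos
    rw [Measure.restrict_apply hF] at hpos
    obtain ⟨A, hAS, hApos⟩ : ∃ A ∈ S, μ (F ∩ A) ≠ 0 := by
      by_contra h
      push_neg at h
      have hFU : F ∩ U = ⋃ A ∈ S, F ∩ A := by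
        rw [hUdef, Set.sUnion_eq_biUnion, Set.inter_iUnion₂]
      rw [hFU] at hpos
      exact hpos.ne' ((measure_biUnion_null_iff hScount).mpr h)
    obtain ⟨hAm, hA0, hAatom⟩ := hS.1 A hAS
    have hFA : μ (F ∩ A) = μ A := by
      rcases hAatom (F ∩ A) Set.inter_subset_right (hF.inter hAm) with h | h
      · exact absurd h hApos
      · exact h
    have hsubU : F ∩ A ⊆ U := Set.inter_subset_right.trans (Set.subset_sUnion_of_mem hAS)
    refine ⟨F ∩ A, Set.inter_subset_left, hF.inter hAm, ?_, ?_⟩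
    · rw [Measure.restrict_apply (hF.inter hAm), Set.inter_eq_self_of_subset_left hsubU]
      exact pos_iff_ne_zero.mpr hApos
    · intro B hB hBm
      rw [Measure.restrict_apply hBm, Set.inter_eq_self_of_subset_left (hB.trans hsubU),
        Measure.restrict_apply (hF.inter hAm), Set.inter_eq_self_of_subset_left hsubU, hFA]
      exact hAatom B (hB.trans Set.inter_subset_right) hBm
  · -- diffuse
    intro A hA
    obtain ⟨hAm, hA0, hAatom⟩ := hA
    rw [Measure.restrict_apply hAm] at hA0
    refine hno (A ∩ Uᶜ) Set.inter_subset_right ⟨hAm.inter hUm.compl, hA0, ?_⟩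
    intro B hB hBm
    have := hAatom B (hB.trans Set.inter_subset_left) hBm
    rwa [Measure.restrict_apply hBm, Measure.restrict_apply hAm,
      Set.inter_eq_self_of_subset_left (hB.trans Set.inter_subset_right)] at this
  · -- uniqueness
    intro νa νd hsum hat hdif
    have happ : ∀ s, μ s = νa s + νd s := fun s => by rw [hsum, Measure.add_apply]
    have hlea : ∀ s, νa s ≤ μ s := fun s => (happ s) ▸ le_self_add
    have hled : ∀ s, νd s ≤ μ s := fun s => (happ s) ▸ le_add_self
    -- νd vanishes on every atom of μ
    have hνdS : ∀ A ∈ S, νd A = 0 := by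
      intro A hAS
      obtain ⟨hAm, hA0, hAatom⟩ := hS.1 A hAS
      by_contra hne
      obtain ⟨B, hBA, hBm, hBeq, hBfin⟩ :=
        exists_finite_subset_of_atom μ μ (fun s => le_rfl) (hS.1 A hAS)
      have hAfin : μ A < ⊤ := hBeq ▸ hBfin
      refine hdif A ⟨hAm, pos_iff_ne_zero.mpr hne, ?_⟩
      intro C hCA hCm
      rcases hAatom C hCA hCm with h | h
      · exact Or.inl (le_antisymm (h ▸ hled C) zero_le)
      · right
        have hdiff : μ (A \ C) = 0 := by
          have h1 : μ (A ∩ C) + μ (A \ C) = μ A := measure_inter_add_diff A hCm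
          rw [Set.inter_eq_self_of_subset_right hCA, h] at h1
          exact (ENNReal.add_right_inj hAfin.ne).mp (h1.trans (add_zero _).symm)
        have h2 : νd (A ∩ C) + νd (A \ C) = νd A := measure_inter_add_diff A hCm
        rw [Set.inter_eq_self_of_subset_right hCA,
          le_antisymm ((hdiff ▸ hled (A \ C)) : νd (A \ C) ≤ 0) zero_le, add_zero] at h2
        exact h2
    have hνdU : νd U = 0 := by
      rw [hUdef, Set.sUnion_eq_biUnion]
      exact (measure_biUnion_null_iff hScount).mpr hνdS
    -- νa vanishes on Uᶜ
    have hνaUc : νa Uᶜ = 0 := by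
      by_contra hne
      obtain ⟨A, hAUc, hAatom'⟩ := hat Uᶜ hUm.compl (pos_iff_ne_zero.mpr hne)
      obtain ⟨B0, hB0A, hB0m, hB0eq, hB0fin⟩ :=
        exists_finite_subset_of_atom μ νa hlea hAatom'
      obtain ⟨hAm, hA0, hAat⟩ := hAatom'
      have hνaAfin : νa A < ⊤ := hB0eq ▸ lt_of_le_of_lt (hlea B0) hB0fin
      set G : Set (Set Ω) := {B | B ⊆ A ∧ MeasurableSet B ∧ νa B = νa A} with hGdef
      set m : ℝ≥0∞ := ⨅ (B : Set Ω) (_ : B ∈ G), μ B with hmdef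
      have hGlow : ∀ B ∈ G, νa A ≤ μ B := fun B hB => hB.2.2 ▸ hlea B
      have hmpos : νa A ≤ m := le_iInf₂ hGlow
      have hmfin : m < ⊤ := lt_of_le_of_lt (iInf₂_le B0 ⟨hB0A, hB0m, hB0eq⟩) hB0fin
      have hfull : ∀ B ∈ G, νa (A \ B) = 0 := by
        intro B hB
        have h1 : νa (A ∩ B) + νa (A \ B) = νa A := measure_inter_add_diff A hB.2.1
        rw [Set.inter_eq_self_of_subset_right hB.1, hB.2.2] at h1
        exact (ENNReal.add_right_inj hνaAfin.ne).mp (h1.trans (add_zero _).symm)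
      have hseq : ∀ n : ℕ, ∃ B, B ∈ G ∧ μ B < m + ((n : ℝ≥0∞) + 1)⁻¹ := by
        intro n
        have hlt : m < m + ((n : ℝ≥0∞) + 1)⁻¹ :=
          ENNReal.lt_add_right hmfin.ne (by simp)
        by_contra h
        push_neg at h
        exact hlt.not_ge (le_iInf₂ fun B hB => h B hB)
      choose B hBG hBlt using hseq
      set Binf : Set Ω := ⋂ n, B n with hBinfdef
      have hBinfA : Binf ⊆ A := (Set.iInter_subset B 0).trans (hBG 0).1
      have hBinfm : MeasurableSet Binf := MeasurableSet.iInter fun n => (hBG n).2.1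
      have hBinfνa : νa Binf = νa A := by
        have hdn : νa (A \ Binf) = 0 := by
          rw [hBinfdef, Set.diff_iInter]
          exact measure_iUnion_null fun n => hfull _ (hBG n)
        have h1 : νa (A ∩ Binf) + νa (A \ Binf) = νa A := measure_inter_add_diff A hBinfm
        rwa [Set.inter_eq_self_of_subset_right hBinfA, hdn, add_zero] at h1
      have hBinfG : Binf ∈ G := ⟨hBinfA, hBinfm, hBinfνa⟩
      have hμBinf : μ Binf = m := by
        refine le_antisymm ?_ (iInf₂_le Binf hBinfG)
        refine ENNReal.le_of_forall_pos_le_add fun ε hε _ => ?_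
        obtain ⟨n, hn⟩ := ENNReal.exists_inv_nat_lt
          (show ((ε : ℝ≥0∞)) ≠ 0 by exact_mod_cast hε.ne')
        have h2 : ((n : ℝ≥0∞) + 1)⁻¹ ≤ (ε : ℝ≥0∞) := le_trans (by gcongr; simp) hn.le
        calc μ Binf ≤ μ (B n) := measure_mono (Set.iInter_subset B n)
          _ ≤ m + ((n : ℝ≥0∞) + 1)⁻¹ := (hBlt n).le
          _ ≤ m + ε := by gcongr
      refine hno Binf (hBinfA.trans hAUc) ⟨hBinfm, ?_, ?_⟩
      · rw [hμBinf]; exact lt_of_lt_of_le hA0 hmpos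
      · intro C hC hCm
        rcases hAat C (hC.trans hBinfA) hCm with h0 | hfullC
        · left
          have hνadiff : νa (Binf \ C) = νa A := by
            have h1 : νa (Binf ∩ C) + νa (Binf \ C) = νa Binf :=
              measure_inter_add_diff Binf hCm
            rwa [Set.inter_eq_self_of_subset_right hC, h0, zero_add, hBinfνa] at h1
          have hGd : Binf \ C ∈ G :=
            ⟨Set.diff_subset.trans hBinfA, hBinfm.diff hCm, hνadiff⟩
          have h3 : m ≤ μ (Binf \ C) := iInf₂_le _ hGd
          have h2 : μ C + μ (Binf \ C) = m := by
            have := measure_inter_add_diff (μ := μ) Binf hCm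
            rwa [Set.inter_eq_self_of_subset_right hC, hμBinf] at this
          by_contra hC0
          have hlt : m < m + μ C := ENNReal.lt_add_right hmfin.ne hC0
          have hge : m + μ C ≤ m :=
            calc m + μ C = μ C + m := add_comm _ _
              _ ≤ μ C + μ (Binf \ C) := add_le_add_right h3 _
              _ = m := h2
          exact absurd (hlt.trans_le hge) (lt_irrefl m)
        · right
          have hGC : C ∈ G := ⟨hC.trans hBinfA, hCm, hfullC⟩
          exact le_antisymm (measure_mono hC) (hμBinf ▸ iInf₂_le C hGC)
    constructor
    · refine Measure.ext fun E hE => ?_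
      have h2 : νa (E \ U) = 0 := measure_mono_null (fun x hx => hx.2) hνaUc
      have h1 : νa (E ∩ U) = νa E := by
        have := measure_inter_add_diff (μ := νa) E hUm
        rwa [h2, add_zero] at this
      have hνd0 : νd (E ∩ U) = 0 := measure_mono_null Set.inter_subset_right hνdU
      rw [Measure.restrict_apply hE]
      calc νa E = νa (E ∩ U) := h1.symm
        _ = νa (E ∩ U) + νd (E ∩ U) := by rw [hνd0, add_zero]
        _ = μ (E ∩ U) := (happ _).symm
    · refine Measure.ext fun E hE => ?_
      have h2 : νd (E \ Uᶜ) = 0 := by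
        refine measure_mono_null (fun x hx => ?_) hνdU
        have := hx.2
        simpa using this
      have h1 : νd (E ∩ Uᶜ) = νd E := by
        have := measure_inter_add_diff (μ := νd) E hUm.compl
        rwa [h2, add_zero] at this
      have hνa0 : νa (E ∩ Uᶜ) = 0 := measure_mono_null Set.inter_subset_right hνaUc
      rw [Measure.restrict_apply hE]
      calc νd E = νd (E ∩ Uᶜ) := h1.symm
        _ = νa (E ∩ Uᶜ) + νd (E ∩ Uᶜ) := by rw [hνa0, zero_add]
        _ = μ (E ∩ Uᶜ) := (happ _).symm
end

section
/- Let (Ω, 𝔪, P) be a probability space with a filtration (ℱ_t)_{t ∈ [0,∞]} and let τ : Ω → [0, ∞] be a stopping time. Then there exists a measurable set A ⊆ {τ < ∞} such that: (i) there is a sequence (σ_n) of predictable stopping times with the property that for P-almost every ω ∈ A there exists n with τ(ω) = σ_n(ω) (i.e. the restriction τ_A is accessible); and (ii) for every predictable stopping time σ, P({ω ∈ Aᶜ : τ(ω) = σ(ω) < ∞}) = 0 (i.e. the restriction τ_{Aᶜ} is totally inaccessible). Here τ_B(ω) := τ(ω) if ω ∈ B and τ_B(ω) := ∞ otherwise,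 so that τ = τ_A ∧ τ_{Aᶜ}. -/
open MeasureTheory Filter
open scoped ENNReal

/-- A stopping time `σ` (w.r.t. the filtration `ℱ`) is predictable (announceable) if there is a
nondecreasing sequence of stopping times `σk ≤ σ`, with `σk ω < σ ω` whenever `σ ω > 0`,
converging pointwise to `σ`. -/
def IsPredictableStoppingTime {Ω : Type*} {m : MeasurableSpace Ω}
    (ℱ : Filtration ℝ≥0∞ m) (σ : Ω → ℝ≥0∞) : Prop :=
  IsStoppingTime ℱ (fun ω => (σ ω : WithTop ℝ≥0∞)) ∧
  ∃ σk : ℕ → Ω → ℝ≥0∞,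
    (∀ k, IsStoppingTime ℱ (fun ω => (σk k ω : WithTop ℝ≥0∞))) ∧
    (∀ k ω, σk k ω ≤ σk (k + 1) ω) ∧
    (∀ k ω, σk k ω ≤ σ ω) ∧
    (∀ k ω, 0 < σ ω → σk k ω < σ ω) ∧
    (∀ ω, Tendsto (fun k => σk k ω) atTop (nhds (σ ω)))

lemma isPredictable_zero {Ω : Type*} {m : MeasurableSpace Ω} (ℱ : Filtration ℝ≥0∞ m) :
    IsPredictableStoppingTime ℱ (fun _ => 0) := by
  refine ⟨isStoppingTime_const ℱ 0, fun _ _ => 0, fun _ => isStoppingTime_const ℱ 0,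
    fun _ _ => le_rfl, fun _ _ => le_rfl, fun _ ω h => absurd h (lt_irrefl 0), fun ω =>
    tendsto_const_nhds⟩

theorem accessible_totally_inaccessible_decomposition
    {Ω : Type*} {m : MeasurableSpace Ω} (ℱ : Filtration ℝ≥0∞ m)
    (P : Measure Ω) [IsProbabilityMeasure P]
    (τ : Ω → ℝ≥0∞) (hτ : IsStoppingTime ℱ (fun ω => (τ ω : WithTop ℝ≥0∞))) :
    ∃ A : Set Ω, MeasurableSet A ∧ A ⊆ {ω | τ ω < ⊤} ∧
      (∃ σn : ℕ → Ω → ℝ≥0∞, (∀ n, IsPredictableStoppingTime ℱ (σn n)) ∧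
        ∀ᵐ ω ∂P, ω ∈ A → ∃ n, τ ω = σn n ω) ∧
      (∀ σ : Ω → ℝ≥0∞, IsPredictableStoppingTime ℱ σ →
        P {ω | ω ∈ Aᶜ ∧ τ ω = σ ω ∧ τ ω < ⊤} = 0) := by
  classical
  -- stopping times are measurable
  have hmeas : ∀ σ : Ω → ℝ≥0∞, IsStoppingTime ℱ (fun ω => (σ ω : WithTop ℝ≥0∞)) → Measurable σ := by
    intro σ hσ
    exact measurable_of_Iic fun i => ℱ.le i _ (by have := hσ.measurableSet_le i; simp only [WithTop.coe_le_coe] at this; exact this)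
  have hτm : Measurable τ := hmeas τ hτ
  -- the union set associated to a sequence of predictable stopping times
  set U : (ℕ → Ω → ℝ≥0∞) → Set Ω :=
    fun σ => ⋃ n, {ω | τ ω = σ n ω ∧ τ ω < ⊤} with hU
  have hUmeas : ∀ σ : ℕ → Ω → ℝ≥0∞, (∀ n, IsPredictableStoppingTime ℱ (σ n)) →
      MeasurableSet (U σ) := by
    intro σ hσ
    refine MeasurableSet.iUnion fun n => ?_
    have h1 : MeasurableSet {ω | τ ω = σ n ω} := by
      have h0 : {ω | τ ω = σ n ω} = {ω | τ ω ≤ σ n ω} ∩ {ω | σ n ω ≤ τ ω} :=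
        Set.ext fun ω => le_antisymm_iff
      rw [h0]
      exact (measurableSet_le hτm (hmeas _ (hσ n).1)).inter
        (measurableSet_le (hmeas _ (hσ n).1) hτm)
    exact h1.inter (measurableSet_lt (α := ℝ≥0∞) hτm measurable_const)
  set S : Set ℝ≥0∞ := {r | ∃ σ : ℕ → Ω → ℝ≥0∞,
    (∀ n, IsPredictableStoppingTime ℱ (σ n)) ∧ P (U σ) = r} with hS
  have hSne : S.Nonempty :=
    ⟨P (U fun _ _ => 0), fun _ _ => 0, fun _ => isPredictable_zero ℱ, rfl⟩
  obtain ⟨u, hu_mono, hu_tend, hu_mem⟩ :=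
    exists_seq_tendsto_sSup hSne (OrderTop.bddAbove S)
  have hsup : (⨆ n, u n) = sSup S :=
    tendsto_nhds_unique (tendsto_atTop_iSup hu_mono) hu_tend
  choose g hg hgP using hu_mem
  -- merge the countable family into a single sequence
  let e : ℕ × ℕ ≃ ℕ := (Denumerable.eqv (ℕ × ℕ))
  set σ : ℕ → Ω → ℝ≥0∞ := fun k => g (e.symm k).1 (e.symm k).2 with hσdef
  have hσpred : ∀ k, IsPredictableStoppingTime ℱ (σ k) := fun k => hg (e.symm k).1 (e.symm k).2
  set A : Set Ω := U σ with hA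
  have hAmeas : MeasurableSet A := hUmeas σ hσpred
  have hPA_le : P A ≤ sSup S := le_sSup ⟨σ, hσpred, rfl⟩
  have hsub : ∀ n, U (g n) ⊆ A := by
    intro n ω hω
    simp only [hA, hU, Set.mem_iUnion, Set.mem_setOf_eq] at hω ⊢
    obtain ⟨k, hk⟩ := hω
    refine ⟨e (n, k), ?_⟩
    simp only [hσdef, Equiv.symm_apply_apply]
    exact hk
  have hPA_ge : sSup S ≤ P A := by
    rw [← hsup]
    exact iSup_le fun n => (hgP n) ▸ measure_mono (hsub n)
  have hPA : P A = sSup S := le_antisymm hPA_le hPA_ge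
  refine ⟨A, hAmeas, ?_, ⟨σ, hσpred, ?_⟩, ?_⟩
  · intro ω hω
    simp only [hA, hU, Set.mem_iUnion, Set.mem_setOf_eq] at hω
    obtain ⟨k, hk⟩ := hω
    exact hk.2
  · refine Filter.Eventually.of_forall fun ω hω => ?_
    simp only [hA, hU, Set.mem_iUnion, Set.mem_setOf_eq] at hω
    obtain ⟨k, hk⟩ := hω
    exact ⟨k, hk.1⟩
  · intro ρ hρ
    set B : Set Ω := {ω | τ ω = ρ ω ∧ τ ω < ⊤} with hB
    have hBmeas : MeasurableSet B := by
      have h1 : U (fun _ => ρ) = B := Set.iUnion_const _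
      rw [← h1]
      exact hUmeas _ fun _ => hρ
    set σ' : ℕ → Ω → ℝ≥0∞ := fun k => Nat.casesOn k ρ σ with hσ'
    have hσ'pred : ∀ k, IsPredictableStoppingTime ℱ (σ' k) := by
      intro k; cases k with
      | zero => exact hρ
      | succ k => exact hσpred k
    have hsub' : A ∪ B ⊆ U σ' := by
      intro ω hω
      rcases hω with hω | hω
      · simp only [hA, hU, Set.mem_iUnion, Set.mem_setOf_eq] at hω ⊢
        obtain ⟨k, hk⟩ := hω
        exact ⟨k + 1, hk⟩
      · simp only [hU, Set.mem_iUnion, Set.mem_setOf_eq]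
        exact ⟨0, hω⟩
    have hle : P (A ∪ B) ≤ P A := by
      calc P (A ∪ B) ≤ P (U σ') := measure_mono hsub'
        _ ≤ sSup S := le_sSup ⟨σ', hσ'pred, rfl⟩
        _ = P A := hPA.symm
    have hunion : P A + P (B \ A) = P (A ∪ B) := by
      rw [← measure_union (disjoint_sdiff_self_right) (hBmeas.diff hAmeas),
        Set.union_diff_self]
    have hzero : P (B \ A) = 0 := by
      have h2 : P A + P (B \ A) ≤ P A + 0 := by
        rw [add_zero]; exact hunion ▸ hle
      have := (ENNReal.add_le_add_iff_left (measure_ne_top P A)).mp h2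
      exact le_antisymm this zero_le
    have : {ω | ω ∈ Aᶜ ∧ τ ω = ρ ω ∧ τ ω < ⊤} = B \ A := by
      ext ω
      simp only [Set.mem_diff, Set.mem_compl_iff, Set.mem_setOf_eq, hB]
      tauto
    rw [this, hzero]
end

section
/- Let (Ω, 𝔪, P) be a probability space with a filtration (ℱ_t)_{t ∈ [0,∞]} and let τ : Ω → [0, ∞] be a random time, i.e. a measurable map. Then there exists a measurable set B ⊆ {τ < ∞} such that: (i) there is a sequence (τ_n) of stopping times with the property that for P-almost every ω ∈ B there exists n with τ(ω) = τ_n(ω) (i.e. the restriction τ_B is thin); and (ii) for every stopping time σ, P({ω ∈ Bᶜ : τ(ω) = σ(ω) < ∞}) = 0 (i.e. the restriction τ_{Bᶜ} is thick, avoiding every stopping time). Here τ_C(ω) := τ(ω) if ω ∈ C and τ_C(ω) := ∞ otherwise, so that τ = τ_B ∧ τ_{Bᶜ}. -/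
open MeasureTheory Filter
open scoped ENNReal

theorem thin_thick_decomposition
    {Ω : Type*} {m : MeasurableSpace Ω} (ℱ : Filtration ℝ≥0∞ m)
    (P : Measure Ω) [IsProbabilityMeasure P]
    (τ : Ω → ℝ≥0∞) (hτ : Measurable τ) :
    ∃ B : Set Ω, MeasurableSet B ∧ B ⊆ {ω | τ ω < ⊤} ∧
      (∃ τn : ℕ → Ω → ℝ≥0∞, (∀ n, IsStoppingTime ℱ (fun ω => (τn n ω : WithTop ℝ≥0∞))) ∧
        ∀ᵐ ω ∂P, ω ∈ B → ∃ n, τ ω = τn n ω) ∧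
      (∀ σ : Ω → ℝ≥0∞, IsStoppingTime ℱ (fun ω => (σ ω : WithTop ℝ≥0∞)) →
        P {ω | ω ∈ Bᶜ ∧ τ ω = σ ω ∧ τ ω < ⊤} = 0) := by
  classical
  -- measurability of {τ = σ < ∞} for a stopping time σ
  have hmeasσ : ∀ σ : Ω → ℝ≥0∞, IsStoppingTime ℱ (fun ω => (σ ω : WithTop ℝ≥0∞)) → Measurable σ := fun σ hσ =>
    measurable_of_Iic fun t => by
      have := ℱ.le t _ (hσ t)
      simpa [Set.preimage, WithTop.coe_le_coe] using this
  have hS : ∀ σ : Ω → ℝ≥0∞, Measurable σ →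
      MeasurableSet {ω | τ ω = σ ω ∧ τ ω < ⊤} := by
    intro σ hσ
    have h1 : {ω | τ ω = σ ω ∧ τ ω < ⊤}
        = ({ω | τ ω ≤ σ ω} ∩ {ω | σ ω ≤ τ ω}) ∩ {ω | τ ω < ⊤} := by
      ext ω; simp only [Set.mem_setOf_eq, Set.mem_inter_iff, le_antisymm_iff]
    rw [h1]
    exact ((measurableSet_le hτ hσ).inter (measurableSet_le hσ hτ)).inter
      (hτ measurableSet_Iio)
  -- the family of countable collections of stopping times
  set A : (ℕ → Ω → ℝ≥0∞) → Set Ω :=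
    fun f => ⋃ n, {ω | τ ω = f n ω ∧ τ ω < ⊤} with hA
  have hAmeas : ∀ f : ℕ → Ω → ℝ≥0∞, (∀ n, IsStoppingTime ℱ (fun ω => (f n ω : WithTop ℝ≥0∞))) → MeasurableSet (A f) :=
    fun f hf => MeasurableSet.iUnion fun n => hS _ (hmeasσ _ (hf n))
  set St : Type _ := {f : ℕ → Ω → ℝ≥0∞ // ∀ n, IsStoppingTime ℱ (fun ω => (f n ω : WithTop ℝ≥0∞))} with hSt
  have hStne : Nonempty St := ⟨⟨fun _ _ => ⊤, fun _ => isStoppingTime_const ℱ (⊤ : ℝ≥0∞)⟩⟩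
  set M : ℝ≥0∞ := ⨆ f : St, P (A f.1) with hM
  have hMtop : M ≠ ⊤ := by
    refine ne_top_of_le_ne_top (by simp : (1 : ℝ≥0∞) ≠ ⊤) (iSup_le fun f => ?_)
    exact le_trans (measure_mono (Set.subset_univ _)) (by simp)
  -- choose near-optimal families
  have hchoice : ∀ k : ℕ, ∃ f : St, M - ((k : ℝ≥0∞) + 1)⁻¹ ≤ P (A f.1) := by
    intro k
    by_cases hM0 : M = 0
    · exact ⟨hStne.some, by simp [hM0]⟩
    · have hlt : M - ((k : ℝ≥0∞) + 1)⁻¹ < M :=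
        ENNReal.sub_lt_self hMtop hM0 (by simp)
      rw [hM, lt_iSup_iff] at hlt
      obtain ⟨f, hf⟩ := hlt
      exact ⟨f, hf.le⟩
  choose f hf using hchoice
  -- combine into one family
  set e : ℕ ≃ ℕ × ℕ := (Denumerable.eqv (ℕ × ℕ)).symm with he
  set g : ℕ → Ω → ℝ≥0∞ := fun n => (f (e n).1).1 (e n).2 with hg
  have hgst : ∀ n, IsStoppingTime ℱ (fun ω => (g n ω : WithTop ℝ≥0∞)) := fun n => (f (e n).1).2 (e n).2
  set B : Set Ω := A g with hB
  have hBmeas : MeasurableSet B := hAmeas g hgst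
  have hBsub : B ⊆ {ω | τ ω < ⊤} := by
    intro ω hω
    obtain ⟨n, hn⟩ := Set.mem_iUnion.mp hω
    exact hn.2
  -- each A (f k).1 is contained in B
  have hsub : ∀ k, A (f k).1 ⊆ B := by
    intro k ω hω
    obtain ⟨j, hj⟩ := Set.mem_iUnion.mp hω
    refine Set.mem_iUnion.mpr ⟨e.symm (k, j), ?_⟩
    have : g (e.symm (k, j)) = (f k).1 j := by
      simp [hg, Equiv.apply_symm_apply]
    rw [this]
    exact hj
  -- P B = M
  have hPBle : P B ≤ M := le_iSup (fun f : St => P (A f.1)) ⟨g, hgst⟩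
  have hPBge : M ≤ P B := by
    refine ENNReal.le_of_forall_pos_le_add fun ε hε hPB => ?_
    obtain ⟨k, hk⟩ := ENNReal.exists_inv_nat_lt
      (show (ε : ℝ≥0∞) ≠ 0 by exact_mod_cast hε.ne')
    have h1 : M - ((k : ℝ≥0∞) + 1)⁻¹ ≤ P B := le_trans (hf k) (measure_mono (hsub k))
    have h2 : M ≤ P B + ((k : ℝ≥0∞) + 1)⁻¹ := tsub_le_iff_right.mp h1
    refine le_trans h2 (add_le_add le_rfl ?_)
    calc ((k : ℝ≥0∞) + 1)⁻¹ ≤ (k : ℝ≥0∞)⁻¹ :=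
          ENNReal.inv_le_inv.mpr (le_add_of_nonneg_right zero_le_one)
      _ ≤ ε := hk.le
  have hPB : P B = M := le_antisymm hPBle hPBge
  refine ⟨B, hBmeas, hBsub, ⟨g, hgst, Eventually.of_forall fun ω hω => ?_⟩, ?_⟩
  · obtain ⟨n, hn⟩ := Set.mem_iUnion.mp hω
    exact ⟨n, hn.1⟩
  · intro σ hσ
    set T : Set Ω := {ω | ω ∈ Bᶜ ∧ τ ω = σ ω ∧ τ ω < ⊤} with hT
    have hTmeas : MeasurableSet T := by
      have : T = Bᶜ ∩ {ω | τ ω = σ ω ∧ τ ω < ⊤} := by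
        ext ω; simp [hT, Set.mem_setOf_eq, Set.mem_inter_iff, and_assoc]
      rw [this]
      exact hBmeas.compl.inter (hS σ (hmeasσ σ hσ))
    -- the augmented family
    set h : ℕ → Ω → ℝ≥0∞ := fun n => Nat.casesOn n σ g with hh
    have hhst : ∀ n, IsStoppingTime ℱ (fun ω => (h n ω : WithTop ℝ≥0∞)) := by
      intro n; cases n with
      | zero => exact hσ
      | succ k => exact hgst k
    have hTB : T ∪ B ⊆ A h := by
      rintro ω (hω | hω)
      · exact Set.mem_iUnion.mpr ⟨0, hω.2⟩
      · obtain ⟨n, hn⟩ := Set.mem_iUnion.mp hω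
        exact Set.mem_iUnion.mpr ⟨n + 1, hn⟩
    have hdisj : Disjoint T B := by
      rw [Set.disjoint_left]
      intro ω hω hωB
      exact hω.1 hωB
    have key : P T + P B ≤ M := by
      rw [← measure_union hdisj hBmeas]
      exact le_trans (measure_mono hTB) (le_iSup (fun f : St => P (A f.1)) ⟨h, hhst⟩)
    rw [← hPB] at key
    have hPBne : P B ≠ ⊤ := measure_ne_top P B
    have : P T ≤ 0 := by
      have := ENNReal.le_of_add_le_add_right hPBne
        (show P T + P B ≤ 0 + P B by simpa using key)
      exact this
    exact le_antisymm this zero_le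
end

section
/- Let (Ω, ℱ) be a measurable space, V a Banach space, Θ a countably additive V-valued vector measure on (Ω, ℱ) admitting a control measure (a finite positive measure θ such that every θ-null set is Θ-null), and 𝒢 ⊆ ℱ a nonempty family of measurable sets closed under countable unions. Then there exist Ḡ ∈ 𝒢 and V-valued vector measures Θ₁, Θ₂ on (Ω, ℱ) such that Θ = Θ₁ + Θ₂, the set Ḡᶜ is Θ₁-null, and every G ∈ 𝒢 is Θ₂-null. Moreover Θ₁ and Θ₂ are unique: necessarily Θ₁(F) = Θ(F ∩ Ḡ) and Θ₂(F) = Θ(F ∩ Ḡᶜ) for every F ∈ ℱ. -/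
open MeasureTheory ENNReal

/-- A set `F` is null for a vector measure `Θ` if every measurable subset of `F` has
zero `Θ`-measure. -/
def VectorMeasureNull {Ω V : Type*} [MeasurableSpace Ω]
    [TopologicalSpace V] [AddCommMonoid V] [T2Space V]
    (Θ : VectorMeasure Ω V) (F : Set Ω) : Prop :=
  ∀ B ⊆ F, MeasurableSet B → Θ B = 0

theorem dellacherie_vector_measure_decomposition
    {Ω V : Type*} [MeasurableSpace Ω]
    [NormedAddCommGroup V] [NormedSpace ℝ V] [CompleteSpace V]
    (Θ : VectorMeasure Ω V) (θ : Measure Ω) [IsFiniteMeasure θ]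
    (hcontrol : ∀ F : Set Ω, MeasurableSet F → θ F = 0 → VectorMeasureNull Θ F)
    (𝒢 : Set (Set Ω)) (h𝒢meas : ∀ G ∈ 𝒢, MeasurableSet G) (h𝒢ne : 𝒢.Nonempty)
    (h𝒢union : ∀ G : ℕ → Set Ω, (∀ n, G n ∈ 𝒢) → (⋃ n, G n) ∈ 𝒢) :
    ∃ Gbar ∈ 𝒢, ∃ Θ₁ Θ₂ : VectorMeasure Ω V,
      (Θ = Θ₁ + Θ₂ ∧ VectorMeasureNull Θ₁ Gbarᶜ ∧ (∀ G ∈ 𝒢, VectorMeasureNull Θ₂ G)) ∧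
      (∀ F : Set Ω, MeasurableSet F → Θ₁ F = Θ (F ∩ Gbar) ∧ Θ₂ F = Θ (F ∩ Gbarᶜ)) ∧
      ∀ Θ₁' Θ₂' : VectorMeasure Ω V,
        Θ = Θ₁' + Θ₂' → VectorMeasureNull Θ₁' Gbarᶜ → (∀ G ∈ 𝒢, VectorMeasureNull Θ₂' G) →
        ∀ F : Set Ω, MeasurableSet F → Θ₁' F = Θ (F ∩ Gbar) ∧ Θ₂' F = Θ (F ∩ Gbarᶜ) := by
  obtain ⟨G₀, hG₀⟩ := h𝒢ne
  set s : ℝ≥0∞ := ⨆ G : 𝒢, θ (G : Set Ω) with hs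
  have hsle : s ≤ θ Set.univ := iSup_le fun G => measure_mono (Set.subset_univ _)
  have hsne : s ≠ ∞ := (lt_of_le_of_lt hsle (measure_lt_top θ _)).ne
  -- choose a sequence approaching the sup
  have hseq : ∀ n : ℕ, ∃ G ∈ 𝒢, s - 1/(n+1) ≤ θ G := by
    intro n
    by_cases h0 : s = 0
    · exact ⟨G₀, hG₀, by simp [h0]⟩
    · have hlt : s - 1/(n+1) < s := ENNReal.sub_lt_self hsne h0 (by simp [ENNReal.div_eq_zero_iff])
      rw [hs, lt_iSup_iff] at hlt
      obtain ⟨⟨G, hG⟩, hGlt⟩ := hlt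
      exact ⟨G, hG, hGlt.le⟩
  choose Gs hGs hGsle using hseq
  set Gbar := ⋃ n, Gs n with hGbar
  have hGbar𝒢 : Gbar ∈ 𝒢 := h𝒢union Gs hGs
  have hGbarMeas : MeasurableSet Gbar := h𝒢meas _ hGbar𝒢
  -- θ Gbar = s
  have hGbarGe : s ≤ θ Gbar := by
    refine ENNReal.le_of_forall_pos_le_add fun ε hε hfin => ?_
    obtain ⟨n, hn⟩ := ENNReal.exists_inv_nat_lt (a := (ε : ℝ≥0∞)) (by exact_mod_cast hε.ne')
    have h1 : s - 1/(n+1) ≤ θ Gbar :=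
      le_trans (hGsle n) (measure_mono (Set.subset_iUnion Gs n))
    have h2 : s ≤ θ Gbar + 1/(n+1) := tsub_le_iff_right.mp h1
    refine h2.trans (add_le_add le_rfl ?_)
    calc (1:ℝ≥0∞)/(n+1) ≤ (↑n)⁻¹ := by
          rw [one_div]
          exact ENNReal.inv_le_inv.mpr (by exact_mod_cast Nat.le_succ n)
      _ ≤ ε := hn.le
  -- every G ∈ 𝒢 has θ (G \ Gbar) = 0
  have hnull : ∀ G ∈ 𝒢, θ (G \ Gbar) = 0 := by
    intro G hG
    have hGmeas := h𝒢meas G hG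
    have hU𝒢 : Gbar ∪ G ∈ 𝒢 := by
      have : (⋃ n, (fun n => if n = 0 then Gbar else G) n) ∈ 𝒢 :=
        h𝒢union _ fun n => by by_cases h : n = 0 <;> simp [h, hGbar𝒢, hG]
      convert this using 1
      ext x
      simp only [Set.mem_iUnion, Set.mem_union]
      constructor
      · rintro (h | h)
        · exact ⟨0, by simp [h]⟩
        · exact ⟨1, by simp [h]⟩
      · rintro ⟨n, hn⟩
        split at hn <;> [exact Or.inl hn; exact Or.inr hn]
    have hle : θ (Gbar ∪ G) ≤ s := le_iSup (fun G : 𝒢 => θ (G : Set Ω)) ⟨_, hU𝒢⟩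
    have hunion : θ Gbar + θ (G \ Gbar) = θ (Gbar ∪ G) := by
      rw [← measure_union disjoint_sdiff_self_right (hGmeas.diff hGbarMeas),
        Set.union_diff_self]
    have h1 : θ Gbar + θ (G \ Gbar) ≤ θ Gbar + 0 := by
      rw [hunion, add_zero]; exact hle.trans hGbarGe
    have h2 := (ENNReal.add_le_add_iff_left (measure_lt_top θ Gbar).ne).mp h1
    exact le_antisymm h2 zero_le
  -- splitting a vector measure along Gbar
  have hdisj : ∀ F : Set Ω, Disjoint (F ∩ Gbar) (F ∩ Gbarᶜ) :=
    fun F => disjoint_compl_right.mono Set.inter_subset_right Set.inter_subset_right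
  have split : ∀ (v : VectorMeasure Ω V) (F : Set Ω), MeasurableSet F →
      v F = v (F ∩ Gbar) + v (F ∩ Gbarᶜ) := by
    intro v F hF
    rw [← VectorMeasure.of_union (hdisj F) (hF.inter hGbarMeas) (hF.inter hGbarMeas.compl)]
    congr 1
    rw [← Set.inter_union_distrib_left, Set.union_compl_self, Set.inter_univ]
  -- define the two vector measures
  refine ⟨Gbar, hGbar𝒢, Θ.restrict Gbar, Θ.restrict Gbarᶜ, ⟨?_, ?_, ?_⟩, ?_, ?_⟩
  · refine VectorMeasure.ext fun F hF => ?_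
    rw [VectorMeasure.add_apply, VectorMeasure.restrict_apply _ hGbarMeas hF,
      VectorMeasure.restrict_apply _ hGbarMeas.compl hF]
    exact split Θ F hF
  · intro B hB hBmeas
    rw [VectorMeasure.restrict_apply _ hGbarMeas hBmeas]
    have h : B ∩ Gbar = ∅ := by
      rw [← Set.subset_empty_iff]
      rintro x ⟨hx1, hx2⟩
      exact hB hx1 hx2
    rw [h]; exact Θ.empty
  · intro G hG B hB hBmeas
    rw [VectorMeasure.restrict_apply _ hGbarMeas.compl hBmeas]
    exact hcontrol _ ((h𝒢meas G hG).diff hGbarMeas) (hnull G hG) _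
      (fun x hx => ⟨hB hx.1, hx.2⟩) (hBmeas.inter hGbarMeas.compl)
  · intro F hF
    exact ⟨VectorMeasure.restrict_apply _ hGbarMeas hF,
      VectorMeasure.restrict_apply _ hGbarMeas.compl hF⟩
  · intro Θ₁' Θ₂' hsum h1null h2null F hF
    have e1 : Θ₁' (F ∩ Gbarᶜ) = 0 :=
      h1null _ Set.inter_subset_right (hF.inter hGbarMeas.compl)
    have e2 : Θ₂' (F ∩ Gbar) = 0 :=
      h2null Gbar hGbar𝒢 _ Set.inter_subset_right (hF.inter hGbarMeas)
    have hΘ1 : Θ (F ∩ Gbar) = Θ₁' (F ∩ Gbar) := by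
      rw [hsum, VectorMeasure.add_apply, e2, add_zero]
    have hΘ2 : Θ (F ∩ Gbarᶜ) = Θ₂' (F ∩ Gbarᶜ) := by
      rw [hsum, VectorMeasure.add_apply, e1, zero_add]
    constructor
    · rw [split Θ₁' F hF, e1, add_zero, hΘ1]
    · rw [split Θ₂' F hF, e2, zero_add, hΘ2]
end

section
/- Let (Ω, ℱ) be a measurable space and 𝒢 ⊆ ℱ a nonempty family of measurable sets closed under countable unions. Then every signed measure μ on (Ω, ℱ) decomposes uniquely as μ = a + d with a ∈ 𝒜(𝒢) and d ∈ 𝒟(𝒢): such a pair (a, d) exists, and if μ = a' + d' with a' ∈ 𝒜(𝒢) and d' ∈ 𝒟(𝒢) then a' = a and d' = d. (In particular 𝒜(𝒢) and 𝒟(𝒢) are complementary subspaces of the space of signed measures.) -/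
open MeasureTheory
open scoped ENNReal NNReal

/-- The set of `𝒢`-atomic signed measures: those concentrated on some set of `𝒢`. -/
def GAtomicMeasures {Ω : Type*} [MeasurableSpace Ω] (𝒢 : Set (Set Ω)) :
    Set (SignedMeasure Ω) :=
  {ν | ∃ G ∈ 𝒢, ν.totalVariation Gᶜ = 0}

/-- The set of `𝒢`-diffuse signed measures: those vanishing (in total variation) on every
set of `𝒢`. -/
def GDiffuseMeasures {Ω : Type*} [MeasurableSpace Ω] (𝒢 : Set (Set Ω)) :
    Set (SignedMeasure Ω) :=
  {ν | ∀ G ∈ 𝒢, ν.totalVariation G = 0}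

lemma tv_zero_of_forall {Ω : Type*} [MeasurableSpace Ω] (ν : SignedMeasure Ω) {s : Set Ω}
    (hs : MeasurableSet s) (h : ∀ t, MeasurableSet t → t ⊆ s → ν t = 0) :
    ν.totalVariation s = 0 := by
  obtain ⟨i, hi₁, hi₂, hi₃, hpos, hneg⟩ := ν.toJordanDecomposition_spec
  rw [SignedMeasure.totalVariation, Measure.add_apply, hpos, hneg,
    SignedMeasure.toMeasureOfZeroLE_apply _ hi₂ hi₁ hs,
    SignedMeasure.toMeasureOfLEZero_apply _ hi₃ hi₁.compl hs]
  have h1 : ν (i ∩ s) = 0 := h _ (hi₁.inter hs) Set.inter_subset_right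
  have h2 : ν (iᶜ ∩ s) = 0 := h _ (hi₁.compl.inter hs) Set.inter_subset_right
  simp [h1, h2]

lemma val_zero_of_tv_zero {Ω : Type*} [MeasurableSpace Ω] (ν : SignedMeasure Ω) {s t : Set Ω}
    (hts : t ⊆ s) (hs : ν.totalVariation s = 0) : ν t = 0 :=
  ν.null_of_totalVariation_zero (measure_mono_null hts hs)

lemma sm_split {Ω : Type*} [MeasurableSpace Ω] (ν : SignedMeasure Ω) {E s : Set Ω}
    (hE : MeasurableSet E) (hs : MeasurableSet s) :
    ν E = ν (E ∩ s) + ν (E ∩ sᶜ) := by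
  rw [← VectorMeasure.of_union
    (Disjoint.mono Set.inter_subset_right Set.inter_subset_right disjoint_compl_right)
    (hE.inter hs) (hE.inter hs.compl), Set.inter_union_compl]

lemma sm_restrict_add_restrict_compl {Ω : Type*} [MeasurableSpace Ω] (μ : SignedMeasure Ω)
    {s : Set Ω} (hs : MeasurableSet s) : μ.restrict s + μ.restrict sᶜ = μ := by
  apply VectorMeasure.ext
  intro E hE
  rw [VectorMeasure.add_apply, VectorMeasure.restrict_apply _ hs hE,
    VectorMeasure.restrict_apply _ hs.compl hE, ← sm_split μ hE hs]

lemma pair_union_mem {Ω : Type*} [MeasurableSpace Ω] {𝒢 : Set (Set Ω)}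
    (h𝒢union : ∀ G : ℕ → Set Ω, (∀ n, G n ∈ 𝒢) → (⋃ n, G n) ∈ 𝒢)
    {A B : Set Ω} (hA : A ∈ 𝒢) (hB : B ∈ 𝒢) : A ∪ B ∈ 𝒢 := by
  have h := h𝒢union (fun n => Nat.casesOn n A fun _ => B) (fun n => by cases n <;> simpa)
  have heq : (⋃ n, (Nat.casesOn n A fun _ => B : Set Ω)) = A ∪ B := by
    ext x; simp only [Set.mem_iUnion, Set.mem_union]
    constructor
    · rintro ⟨n, hn⟩; cases n
      · exact Or.inl hn
      · exact Or.inr hn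
    · rintro (h | h)
      · exact ⟨0, h⟩
      · exact ⟨1, h⟩
  rwa [heq] at h

theorem signedMeasure_atomic_diffuse_decomposition
    {Ω : Type*} [MeasurableSpace Ω]
    (𝒢 : Set (Set Ω)) (h𝒢meas : ∀ G ∈ 𝒢, MeasurableSet G) (h𝒢ne : 𝒢.Nonempty)
    (h𝒢union : ∀ G : ℕ → Set Ω, (∀ n, G n ∈ 𝒢) → (⋃ n, G n) ∈ 𝒢)
    (μ : SignedMeasure Ω) :
    ∃ a d : SignedMeasure Ω,
      a ∈ GAtomicMeasures 𝒢 ∧ d ∈ GDiffuseMeasures 𝒢 ∧ μ = a + d ∧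
      ∀ a' d' : SignedMeasure Ω,
        a' ∈ GAtomicMeasures 𝒢 → d' ∈ GDiffuseMeasures 𝒢 → μ = a' + d' →
          a' = a ∧ d' = d := by
  classical
  set T : Measure Ω := μ.totalVariation with hT
  haveI : IsFiniteMeasure T := by
    rw [hT, SignedMeasure.totalVariation]; infer_instance
  set M : ℝ≥0∞ := ⨆ (G : 𝒢), T G with hM
  have hseq : ∀ n : ℕ, ∃ G ∈ 𝒢, M ≤ T G + 1 / (n + 1) := by
    intro n
    by_cases hMn : M ≤ 1 / (n + 1)
    · obtain ⟨G, hG⟩ := h𝒢ne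
      exact ⟨G, hG, hMn.trans (le_add_left le_rfl)⟩
    · have hlt : M - 1 / (n + 1) < M := by
        apply ENNReal.sub_lt_self
        · exact ne_top_of_le_ne_top (measure_ne_top T Set.univ)
            (iSup_le fun G => measure_mono (Set.subset_univ _))
        · intro h0; exact hMn (h0 ▸ zero_le)
        · simp [Nat.cast_add_one_ne_zero]
      rw [hM, lt_iSup_iff] at hlt
      obtain ⟨⟨G, hG⟩, hGlt⟩ := hlt
      exact ⟨G, hG, tsub_le_iff_right.mp hGlt.le⟩
  choose Gs hGs hGsle using hseq
  set G0 : Set Ω := ⋃ n, Gs n with hG0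
  have hG0mem : G0 ∈ 𝒢 := h𝒢union Gs hGs
  have hG0meas : MeasurableSet G0 := h𝒢meas _ hG0mem
  have hTG0 : M ≤ T G0 := by
    apply ENNReal.le_of_forall_pos_le_add
    intro ε hε _
    obtain ⟨n, hn⟩ := ENNReal.exists_inv_nat_lt (by exact_mod_cast hε.ne' : (ε : ℝ≥0∞) ≠ 0)
    refine le_trans (hGsle n) (add_le_add (measure_mono (Set.subset_iUnion _ n)) ?_)
    rw [one_div]
    exact le_of_lt (lt_of_le_of_lt (by gcongr <;> simp) hn)
  have hmax : ∀ G ∈ 𝒢, T (G \ G0) = 0 := by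
    intro G hG
    have hunion : G ∪ G0 ∈ 𝒢 := pair_union_mem h𝒢union hG hG0mem
    have h1 : T (G \ G0) + T G0 ≤ 0 + T G0 := by
      calc T (G \ G0) + T G0 = T ((G \ G0) ∪ G0) := by
            rw [measure_union disjoint_sdiff_self_left hG0meas]
        _ = T (G ∪ G0) := by rw [Set.diff_union_self]
        _ ≤ M := le_iSup (fun G : 𝒢 => T G) ⟨G ∪ G0, hunion⟩
        _ ≤ T G0 := hTG0
        _ = 0 + T G0 := (zero_add _).symm
    have := (ENNReal.add_le_add_iff_right (measure_ne_top T G0)).mp h1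
    simpa using this
  -- properties of the candidate decomposition
  have hatv : SignedMeasure.totalVariation (μ.restrict G0) G0ᶜ = 0 := by
    refine tv_zero_of_forall _ hG0meas.compl fun t ht hts => ?_
    rw [VectorMeasure.restrict_apply _ hG0meas ht]
    have : t ∩ G0 = ∅ := by
      rw [Set.eq_empty_iff_forall_notMem]; rintro x ⟨hx1, hx2⟩; exact hts hx1 hx2
    simp [this]
  have hdtv : ∀ G ∈ 𝒢, SignedMeasure.totalVariation (μ.restrict G0ᶜ) G = 0 := by
    intro G hG
    refine tv_zero_of_forall _ (h𝒢meas G hG) fun t ht hts => ?_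
    rw [VectorMeasure.restrict_apply _ hG0meas.compl ht]
    refine val_zero_of_tv_zero μ (s := G \ G0) ?_ (hmax G hG)
    rintro x ⟨hx1, hx2⟩; exact ⟨hts hx1, hx2⟩
  refine ⟨μ.restrict G0, μ.restrict G0ᶜ, ⟨G0, hG0mem, hatv⟩, hdtv,
    (sm_restrict_add_restrict_compl μ hG0meas).symm, ?_⟩
  rintro a' d' ⟨G', hG', hG'tv⟩ hd' hμ'
  have hG'meas := h𝒢meas G' hG'
  have hUmem : G0 ∪ G' ∈ 𝒢 := pair_union_mem h𝒢union hG0mem hG'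
  set U : Set Ω := G0 ∪ G' with hU
  have hUmeas : MeasurableSet U := hG0meas.union hG'meas
  have hsum : μ.restrict G0 + μ.restrict G0ᶜ = a' + d' := by
    rw [sm_restrict_add_restrict_compl μ hG0meas, hμ']
  have key : a' - μ.restrict G0 = 0 := by
    apply VectorMeasure.ext
    intro E hE
    rw [sm_split (a' - μ.restrict G0) hE hUmeas]
    have hdiff : a' - μ.restrict G0 = μ.restrict G0ᶜ - d' := by
      rw [sub_eq_sub_iff_add_eq_add, ← hsum]; exact add_comm _ _
    have h2 : (a' - μ.restrict G0) (E ∩ U) = 0 := by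
      rw [hdiff, VectorMeasure.sub_apply,
        val_zero_of_tv_zero _ Set.inter_subset_right (hdtv _ hUmem),
        val_zero_of_tv_zero _ Set.inter_subset_right (hd' _ hUmem), sub_zero]
    have h3 : (a' - μ.restrict G0) (E ∩ Uᶜ) = 0 := by
      rw [VectorMeasure.sub_apply]
      have hc1 : a' (E ∩ Uᶜ) = 0 := by
        refine val_zero_of_tv_zero _ ?_ hG'tv
        rintro x ⟨_, hx⟩
        exact fun hxg => hx (Or.inr hxg)
      have hc2 : (μ.restrict G0) (E ∩ Uᶜ) = 0 := by
        refine val_zero_of_tv_zero _ ?_ hatv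
        rintro x ⟨_, hx⟩
        exact fun hxg => hx (Or.inl hxg)
      rw [hc1, hc2, sub_zero]
    rw [h2, h3, add_zero, VectorMeasure.zero_apply]
  have ha : a' = μ.restrict G0 := sub_eq_zero.mp key
  refine ⟨ha, ?_⟩
  rw [ha] at hsum
  exact (add_left_cancel hsum).symm
end

section
/- Let (Ω, ℱ) be a measurable space, 𝒢 ⊆ ℱ a nonempty family of measurable sets closed under countable unions, and μ a signed measure on (Ω, ℱ) with decomposition μ = a + d, where a ∈ 𝒜(𝒢) and d ∈ 𝒟(𝒢). Then a is the unique nearest point to μ in 𝒜(𝒢) for the total variation distance: for every a' ∈ 𝒜(𝒢) with a' ≠ a one has |μ − a|(Ω) < |μ − a'|(Ω). -/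
open MeasureTheory

section Aux

variable {Ω : Type*} [MeasurableSpace Ω]

lemma tv_ne_top (ν : SignedMeasure Ω) (S : Set Ω) : ν.totalVariation S ≠ ⊤ := by
  haveI := ν.toJordanDecomposition.posPart_finite
  haveI := ν.toJordanDecomposition.negPart_finite
  rw [SignedMeasure.totalVariation, Measure.add_apply]
  exact ENNReal.add_ne_top.2 ⟨measure_ne_top _ _, measure_ne_top _ _⟩

lemma tv_key_le (ν : SignedMeasure Ω) {S t : Set Ω} (hS : MeasurableSet S)
    (ht : MeasurableSet t) (hts : t ⊆ S) :
    ν t - ν (S \ t) ≤ (ν.totalVariation S).toReal := by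
  obtain ⟨P, hP, hP2, hP3, hpos, hneg⟩ := ν.toJordanDecomposition_spec
  have hnn : ∀ u : Set Ω, MeasurableSet u → u ⊆ P → 0 ≤ ν u := fun u hu hsub =>
    ν.nonneg_of_zero_le_restrict (ν.zero_le_restrict_subset hP hsub hP2)
  have hnp : ∀ u : Set Ω, MeasurableSet u → u ⊆ Pᶜ → ν u ≤ 0 := fun u hu hsub =>
    ν.nonpos_of_restrict_le_zero (VectorMeasure.restrict_le_restrict_subset ν 0 hP.compl hP3 hsub)
  have hTV : (ν.totalVariation S).toReal = ν (P ∩ S) - ν (Pᶜ ∩ S) := by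
    rw [SignedMeasure.totalVariation, Measure.add_apply, hpos, hneg,
      SignedMeasure.toMeasureOfZeroLE_apply _ hP2 hP hS,
      SignedMeasure.toMeasureOfLEZero_apply _ hP3 hP.compl hS,
      ENNReal.toReal_add ENNReal.coe_ne_top ENNReal.coe_ne_top]
    simp
    ring
  have hsplit : ∀ u : Set Ω, MeasurableSet u → ν u = ν (u ∩ P) + ν (u ∩ Pᶜ) := by
    intro u hu
    rw [← ν.of_union (show Disjoint (u ∩ P) (u ∩ Pᶜ) from
      Disjoint.mono inf_le_right inf_le_right disjoint_compl_right)
      (hu.inter hP) (hu.inter hP.compl), Set.inter_union_compl]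
  have h1 : ν t ≤ ν (P ∩ S) := by
    have e1 : ν (P ∩ S) = ν (t ∩ P) + ν ((S \ t) ∩ P) := by
      rw [← ν.of_union (show Disjoint (t ∩ P) ((S \ t) ∩ P) from
        Disjoint.mono inf_le_left inf_le_left disjoint_sdiff_self_right)
        (ht.inter hP) ((hS.diff ht).inter hP)]
      congr 1
      rw [Set.inter_comm P S]
      rw [← Set.union_inter_distrib_right, Set.union_diff_cancel hts]
    rw [hsplit t ht, e1]
    have := hnp (t ∩ Pᶜ) (ht.inter hP.compl) Set.inter_subset_right
    have := hnn ((S \ t) ∩ P) ((hS.diff ht).inter hP) Set.inter_subset_right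
    linarith
  have h2 : ν (Pᶜ ∩ S) ≤ ν (S \ t) := by
    have e1 : ν (Pᶜ ∩ S) = ν (t ∩ Pᶜ) + ν ((S \ t) ∩ Pᶜ) := by
      rw [← ν.of_union (show Disjoint (t ∩ Pᶜ) ((S \ t) ∩ Pᶜ) from
        Disjoint.mono inf_le_left inf_le_left disjoint_sdiff_self_right)
        (ht.inter hP.compl) ((hS.diff ht).inter hP.compl)]
      congr 1
      rw [Set.inter_comm Pᶜ S]
      rw [← Set.union_inter_distrib_right, Set.union_diff_cancel hts]
    rw [hsplit (S \ t) (hS.diff ht), e1]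
    have := hnp (t ∩ Pᶜ) (ht.inter hP.compl) Set.inter_subset_right
    have := hnn ((S \ t) ∩ P) ((hS.diff ht).inter hP) Set.inter_subset_right
    linarith
  rw [hTV]
  linarith

lemma tv_formula (ν : SignedMeasure Ω) {S : Set Ω} (hS : MeasurableSet S) :
    ∃ t : Set Ω, MeasurableSet t ∧ t ⊆ S ∧
      (ν.totalVariation S).toReal = ν t - ν (S \ t) := by
  obtain ⟨P, hP, hP2, hP3, hpos, hneg⟩ := ν.toJordanDecomposition_spec
  refine ⟨P ∩ S, hP.inter hS, Set.inter_subset_right, ?_⟩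
  have hdiff : S \ (P ∩ S) = Pᶜ ∩ S := by
    ext x; simp [Set.mem_diff]; tauto
  rw [hdiff, SignedMeasure.totalVariation, Measure.add_apply, hpos, hneg,
    SignedMeasure.toMeasureOfZeroLE_apply _ hP2 hP hS,
    SignedMeasure.toMeasureOfLEZero_apply _ hP3 hP.compl hS,
    ENNReal.toReal_add ENNReal.coe_ne_top ENNReal.coe_ne_top]
  simp
  ring

lemma tv_add_le (ν₁ ν₂ : SignedMeasure Ω) {S : Set Ω} (hS : MeasurableSet S) :
    (ν₁ + ν₂).totalVariation S ≤ ν₁.totalVariation S + ν₂.totalVariation S := by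
  rw [← ENNReal.toReal_le_toReal (tv_ne_top _ _)
    (ENNReal.add_ne_top.2 ⟨tv_ne_top _ _, tv_ne_top _ _⟩),
    ENNReal.toReal_add (tv_ne_top _ _) (tv_ne_top _ _)]
  obtain ⟨t, ht, hts, heq⟩ := tv_formula (ν₁ + ν₂) hS
  have h1 := tv_key_le ν₁ hS ht hts
  have h2 := tv_key_le ν₂ hS ht hts
  have e1 : (ν₁ + ν₂) t = ν₁ t + ν₂ t := rfl
  have e2 : (ν₁ + ν₂) (S \ t) = ν₁ (S \ t) + ν₂ (S \ t) := rfl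
  rw [heq, e1, e2]
  linarith

lemma tv_add_eq_of_zero (ν₁ ν₂ : SignedMeasure Ω) {S : Set Ω} (hS : MeasurableSet S)
    (h : ν₂.totalVariation S = 0) :
    (ν₁ + ν₂).totalVariation S = ν₁.totalVariation S := by
  refine le_antisymm ?_ ?_
  · have := tv_add_le ν₁ ν₂ hS
    rwa [h, add_zero] at this
  · have h1 : ν₁ = (ν₁ + ν₂) + -ν₂ := by abel
    calc ν₁.totalVariation S = ((ν₁ + ν₂) + -ν₂).totalVariation S := by rw [← h1]
      _ ≤ (ν₁ + ν₂).totalVariation S + (-ν₂).totalVariation S := tv_add_le _ _ hS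
      _ = (ν₁ + ν₂).totalVariation S := by
          rw [SignedMeasure.totalVariation_neg, h, add_zero]

lemma eq_zero_of_tv_univ_eq_zero (ν : SignedMeasure Ω)
    (h : ν.totalVariation Set.univ = 0) : ν = 0 := by
  ext t ht
  rw [VectorMeasure.zero_apply]
  exact ν.null_of_totalVariation_zero
    (le_antisymm (h ▸ measure_mono (Set.subset_univ t)) zero_le)

end Aux

theorem atomic_part_is_unique_nearest_point
    {Ω : Type*} [MeasurableSpace Ω]
    (𝒢 : Set (Set Ω)) (h𝒢meas : ∀ G ∈ 𝒢, MeasurableSet G) (h𝒢ne : 𝒢.Nonempty)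
    (h𝒢union : ∀ G : ℕ → Set Ω, (∀ n, G n ∈ 𝒢) → (⋃ n, G n) ∈ 𝒢)
    (μ a d : SignedMeasure Ω)
    (ha : a ∈ GAtomicMeasures 𝒢) (hd : d ∈ GDiffuseMeasures 𝒢) (hμ : μ = a + d) :
    ∀ a' ∈ GAtomicMeasures 𝒢, a' ≠ a →
      (μ - a).totalVariation Set.univ < (μ - a').totalVariation Set.univ := by
  obtain ⟨Ga, hGa, hGa0⟩ := ha
  rintro a' ⟨G', hG', hG'0⟩ hne
  set F : ℕ → Set Ω := fun n => if n = 0 then Ga else G' with hF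
  have hFmem : ∀ n, F n ∈ 𝒢 := by
    intro n; by_cases h : n = 0 <;> simp [hF, h, hGa, hG']
  set G : Set Ω := ⋃ n, F n with hGdef
  have hG : G ∈ 𝒢 := h𝒢union F hFmem
  have hGmeas : MeasurableSet G := h𝒢meas G hG
  have hGaG : Ga ⊆ G := by
    intro x hx; exact Set.mem_iUnion.2 ⟨0, by simp [hF, hx]⟩
  have hG'G : G' ⊆ G := by
    intro x hx; exact Set.mem_iUnion.2 ⟨1, by simp [hF, hx]⟩
  have haGc : a.totalVariation Gᶜ = 0 :=
    measure_mono_null (Set.compl_subset_compl.2 hGaG) hGa0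
  have ha'Gc : a'.totalVariation Gᶜ = 0 :=
    measure_mono_null (Set.compl_subset_compl.2 hG'G) hG'0
  have hdG : d.totalVariation G = 0 := hd G hG
  set e : SignedMeasure Ω := a - a' with he
  have heGc : e.totalVariation Gᶜ = 0 := by
    have h1 : e = a + -a' := by rw [he]; abel
    have := tv_add_le a (-a') hGmeas.compl
    rw [← h1, haGc, SignedMeasure.totalVariation_neg, ha'Gc, add_zero] at this
    exact le_antisymm this zero_le
  have heG : e.totalVariation G ≠ 0 := by
    intro h0
    have huniv : e.totalVariation Set.univ = 0 := by
      rw [← measure_add_measure_compl hGmeas, h0, heGc, add_zero]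
    have := eq_zero_of_tv_univ_eq_zero e huniv
    rw [he, sub_eq_zero] at this
    exact hne this.symm
  have hμa : μ - a = d := by rw [hμ]; abel
  have hμa'G : (μ - a').totalVariation G = e.totalVariation G := by
    have h1 : μ - a' = e + d := by rw [hμ, he]; abel
    rw [h1]; exact tv_add_eq_of_zero e d hGmeas hdG
  have hμa'Gc : (μ - a').totalVariation Gᶜ = d.totalVariation Gᶜ := by
    have h1 : μ - a' = d + e := by rw [hμ, he]; abel
    rw [h1]; exact tv_add_eq_of_zero d e hGmeas.compl heGc
  have hlhs : (μ - a).totalVariation Set.univ = d.totalVariation Gᶜ := by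
    rw [hμa, ← measure_add_measure_compl hGmeas, hdG, zero_add]
  have hrhs : (μ - a').totalVariation Set.univ
      = e.totalVariation G + d.totalVariation Gᶜ := by
    rw [← measure_add_measure_compl hGmeas, hμa'G, hμa'Gc]
  rw [hlhs, hrhs, add_comm]
  exact ENNReal.lt_add_right (tv_ne_top _ _) heG
end

section
/- Let (Ω, ℱ) be a measurable space and 𝒢 ⊆ ℱ a nonempty family of measurable sets closed under countable unions. Then both 𝒜(𝒢) and 𝒟(𝒢) are closed in total variation norm: if (μ_n) is a sequence of signed measures in 𝒜(𝒢) (respectively in 𝒟(𝒢)) and μ is a signed measure with |μ − μ_n|(Ω) → 0 as n → ∞, then μ ∈ 𝒜(𝒢) (respectively μ ∈ 𝒟(𝒢)). -/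
open MeasureTheory Filter

lemma tv_ne_top_s13 {Ω : Type*} [MeasurableSpace Ω] (s : SignedMeasure Ω) (A : Set Ω) :
    s.totalVariation A ≠ ⊤ := by
  rw [MeasureTheory.SignedMeasure.totalVariation, Measure.add_apply]
  exact ENNReal.add_ne_top.2 ⟨measure_ne_top _ _, measure_ne_top _ _⟩

lemma abs_le_tv {Ω : Type*} [MeasurableSpace Ω] (s : SignedMeasure Ω) {B : Set Ω}
    (hB : MeasurableSet B) : |s B| ≤ (s.totalVariation B).toReal := by
  obtain ⟨i, hi₁, hi₂, hi₃, hpos, hneg⟩ := s.toJordanDecomposition_spec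
  have hdisj : Disjoint (i ∩ B) (iᶜ ∩ B) :=
    Set.disjoint_of_subset Set.inter_subset_left Set.inter_subset_left disjoint_compl_right
  have hunion : (i ∩ B) ∪ (iᶜ ∩ B) = B := by
    rw [← Set.union_inter_distrib_right, Set.union_compl_self, Set.univ_inter]
  have hsplit : s B = s (i ∩ B) + s (iᶜ ∩ B) := by
    rw [← VectorMeasure.of_union hdisj (hi₁.inter hB) (hi₁.compl.inter hB), hunion]
  have h1 : 0 ≤ s (i ∩ B) :=
    VectorMeasure.nonneg_of_zero_le_restrict s
      (VectorMeasure.zero_le_restrict_subset s hi₁ Set.inter_subset_left hi₂)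
  have h2 : s (iᶜ ∩ B) ≤ 0 :=
    VectorMeasure.nonpos_of_restrict_le_zero s
      (VectorMeasure.restrict_le_zero_subset s hi₁.compl Set.inter_subset_left hi₃)
  have htv : (s.totalVariation B).toReal = s (i ∩ B) + -s (iᶜ ∩ B) := by
    rw [MeasureTheory.SignedMeasure.totalVariation, Measure.add_apply, hpos, hneg,
      SignedMeasure.toMeasureOfZeroLE_apply _ hi₂ hi₁ hB,
      SignedMeasure.toMeasureOfLEZero_apply _ hi₃ hi₁.compl hB,
      ENNReal.toReal_add (by simp) (by simp)]
    simp
  rw [htv, hsplit]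
  have := abs_add_le (s (i ∩ B)) (s (iᶜ ∩ B))
  rw [abs_of_nonneg h1, abs_of_nonpos h2] at this
  linarith

lemma tv_le {Ω : Type*} [MeasurableSpace Ω] (μ ν : SignedMeasure Ω) {A : Set Ω}
    (hA : MeasurableSet A) :
    μ.totalVariation A ≤ (μ - ν).totalVariation A + ν.totalVariation A := by
  obtain ⟨i, hi₁, hi₂, hi₃, hpos, hneg⟩ := μ.toJordanDecomposition_spec
  set σ := μ - ν with hσ
  have hσapp : ∀ B : Set Ω, MeasurableSet B → μ B = σ B + ν B := by
    intro B hB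
    rw [hσ, VectorMeasure.sub_apply]; ring
  have hdisj : Disjoint (i ∩ A) (iᶜ ∩ A) :=
    Set.disjoint_of_subset Set.inter_subset_left Set.inter_subset_left disjoint_compl_right
  have hunion : (i ∩ A) ∪ (iᶜ ∩ A) = A := by
    rw [← Set.union_inter_distrib_right, Set.union_compl_self, Set.univ_inter]
  have hm1 : MeasurableSet (i ∩ A) := hi₁.inter hA
  have hm2 : MeasurableSet (iᶜ ∩ A) := hi₁.compl.inter hA
  have htv : (μ.totalVariation A).toReal = μ (i ∩ A) + -μ (iᶜ ∩ A) := by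
    rw [MeasureTheory.SignedMeasure.totalVariation, Measure.add_apply, hpos, hneg,
      SignedMeasure.toMeasureOfZeroLE_apply _ hi₂ hi₁ hA,
      SignedMeasure.toMeasureOfLEZero_apply _ hi₃ hi₁.compl hA,
      ENNReal.toReal_add (by simp) (by simp)]
    simp
  -- bound the real value
  have hb1 : μ (i ∩ A) ≤ (σ.totalVariation (i ∩ A)).toReal + (ν.totalVariation (i ∩ A)).toReal := by
    rw [hσapp _ hm1]
    have := abs_le_tv σ hm1
    have := abs_le_tv ν hm1
    have h1 := abs_le.1 (abs_le_tv σ hm1)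
    have h2 := abs_le.1 (abs_le_tv ν hm1)
    linarith [h1.2, h2.2]
  have hb2 : -μ (iᶜ ∩ A) ≤ (σ.totalVariation (iᶜ ∩ A)).toReal +
      (ν.totalVariation (iᶜ ∩ A)).toReal := by
    rw [hσapp _ hm2]
    have h1 := abs_le.1 (abs_le_tv σ hm2)
    have h2 := abs_le.1 (abs_le_tv ν hm2)
    linarith [h1.1, h2.1]
  have hadd : ∀ τ : SignedMeasure Ω,
      τ.totalVariation (i ∩ A) + τ.totalVariation (iᶜ ∩ A) = τ.totalVariation A := by
    intro τ
    rw [← measure_union hdisj hm2, hunion]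
  have hreal : (μ.totalVariation A).toReal ≤
      (σ.totalVariation A).toReal + (ν.totalVariation A).toReal := by
    rw [htv, ← hadd σ, ← hadd ν,
      ENNReal.toReal_add (tv_ne_top_s13 _ _) (tv_ne_top_s13 _ _),
      ENNReal.toReal_add (tv_ne_top_s13 _ _) (tv_ne_top_s13 _ _)]
    linarith
  rw [← ENNReal.toReal_le_toReal (tv_ne_top_s13 _ _)
    (ENNReal.add_ne_top.2 ⟨tv_ne_top_s13 _ _, tv_ne_top_s13 _ _⟩),
    ENNReal.toReal_add (tv_ne_top_s13 _ _) (tv_ne_top_s13 _ _)]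
  exact hreal

theorem atomic_and_diffuse_closed_in_totalVariation
    {Ω : Type*} [MeasurableSpace Ω]
    (𝒢 : Set (Set Ω)) (h𝒢meas : ∀ G ∈ 𝒢, MeasurableSet G) (h𝒢ne : 𝒢.Nonempty)
    (h𝒢union : ∀ G : ℕ → Set Ω, (∀ n, G n ∈ 𝒢) → (⋃ n, G n) ∈ 𝒢) :
    (∀ (μn : ℕ → SignedMeasure Ω) (μ : SignedMeasure Ω),
      (∀ n, μn n ∈ GAtomicMeasures 𝒢) →
      Tendsto (fun n => (μ - μn n).totalVariation Set.univ) atTop (nhds 0) →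
      μ ∈ GAtomicMeasures 𝒢) ∧
    (∀ (μn : ℕ → SignedMeasure Ω) (μ : SignedMeasure Ω),
      (∀ n, μn n ∈ GDiffuseMeasures 𝒢) →
      Tendsto (fun n => (μ - μn n).totalVariation Set.univ) atTop (nhds 0) →
      μ ∈ GDiffuseMeasures 𝒢) := by
  constructor
  · intro μn μ hμn hlim
    choose G hG hGnull using hμn
    refine ⟨⋃ n, G n, h𝒢union G hG, ?_⟩
    set U := ⋃ n, G n
    have hUmeas : MeasurableSet U := MeasurableSet.iUnion fun n => h𝒢meas _ (hG n)
    have hbound : ∀ n, μ.totalVariation Uᶜ ≤ (μ - μn n).totalVariation Set.univ := by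
      intro n
      calc μ.totalVariation Uᶜ
          ≤ (μ - μn n).totalVariation Uᶜ + (μn n).totalVariation Uᶜ :=
            tv_le μ (μn n) hUmeas.compl
        _ ≤ (μ - μn n).totalVariation Set.univ + 0 := by
            gcongr
            · exact Set.subset_univ _
            · have : Uᶜ ⊆ (G n)ᶜ :=
                Set.compl_subset_compl.2 (Set.subset_iUnion G n)
              exact le_of_eq (measure_mono_null this (hGnull n))
        _ = (μ - μn n).totalVariation Set.univ := add_zero _
    have : μ.totalVariation Uᶜ ≤ 0 := ge_of_tendsto' hlim hbound
    exact le_antisymm this zero_le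
  · intro μn μ hμn hlim G hG
    have hGm := h𝒢meas G hG
    have hbound : ∀ n, μ.totalVariation G ≤ (μ - μn n).totalVariation Set.univ := by
      intro n
      calc μ.totalVariation G
          ≤ (μ - μn n).totalVariation G + (μn n).totalVariation G := tv_le μ (μn n) hGm
        _ ≤ (μ - μn n).totalVariation Set.univ + 0 := by
            gcongr
            · exact Set.subset_univ _
            · exact le_of_eq (hμn n G hG)
        _ = (μ - μn n).totalVariation Set.univ := add_zero _
    have : μ.totalVariation G ≤ 0 := ge_of_tendsto' hlim hbound
    exact le_antisymm this zero_le
end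

section
/- Let (Ω, ℱ) be a measurable space, 𝒢 ⊆ ℱ a nonempty family of measurable sets closed under countable unions, I a nonempty directed preordered index set, and (μ^i)_{i ∈ I} a monotone net of finite positive measures on (Ω, ℱ) (i.e. i ≤ j implies μ^i ≤ μ^j setwise) whose supremum μ := ⋁_{i ∈ I} μ^i in the lattice of measures is a finite measure. Let G_i be a 𝒢-atomic support of μ^i for each i, and G a 𝒢-atomic support of μ. Then ⋁_{i ∈ I} (μ^i restricted to G_i) = μ restricted to G; in particular the 𝒢-atomic parts satisfy 0 ≤ μ^i_𝒢 ↑ μ_𝒢, so 𝒜(𝒢) contains the supremum of every increasing net of its positive elements. -/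
open MeasureTheory

theorem atomic_part_sup_of_monotone_net
    {Ω : Type*} [MeasurableSpace Ω]
    (𝒢 : Set (Set Ω)) (h𝒢meas : ∀ G ∈ 𝒢, MeasurableSet G) (h𝒢ne : 𝒢.Nonempty)
    (h𝒢union : ∀ G : ℕ → Set Ω, (∀ n, G n ∈ 𝒢) → (⋃ n, G n) ∈ 𝒢)
    {I : Type*} [Preorder I] [IsDirected I (· ≤ ·)] [Nonempty I]
    (μi : I → Measure Ω) [∀ i, IsFiniteMeasure (μi i)] (hmono : Monotone μi)
    (μ : Measure Ω) [IsFiniteMeasure μ] (hμ : μ = ⨆ i, μi i)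
    (Gi : I → Set Ω) (hGimem : ∀ i, Gi i ∈ 𝒢)
    (hGi : ∀ i, ∀ G ∈ 𝒢, μi i (G \ Gi i) = 0)
    (G : Set Ω) (hGmem : G ∈ 𝒢) (hG : ∀ G' ∈ 𝒢, μ (G' \ G) = 0) :
    Monotone (fun i => (μi i).restrict (Gi i)) ∧
    (⨆ i, (μi i).restrict (Gi i)) = μ.restrict G := by
  have hGmeas : MeasurableSet G := h𝒢meas G hGmem
  have hGimeas : ∀ i, MeasurableSet (Gi i) := fun i => h𝒢meas _ (hGimem i)
  have hle : ∀ i, μi i ≤ μ := by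
    intro i; rw [hμ]; exact le_iSup μi i
  -- monotone part
  have hm : Monotone (fun i => (μi i).restrict (Gi i)) := by
    intro i j hij
    rw [Measure.le_iff']
    intro s
    rw [Measure.restrict_apply' (hGimeas i), Measure.restrict_apply' (hGimeas j)]
    have h1 : μi i (s ∩ Gi i) ≤ μi i ((s ∩ Gi i) ∩ Gi j) + μi i ((s ∩ Gi i) \ Gi j) :=
      measure_le_inter_add_diff _ _ _
    have h2 : μi i ((s ∩ Gi i) \ Gi j) = 0 := by
      have : μi i ((s ∩ Gi i) \ Gi j) ≤ μi j (Gi i \ Gi j) :=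
        le_trans (measure_mono (Set.diff_subset_diff_left Set.inter_subset_right))
          (Measure.le_iff'.1 (hmono hij) _)
      simpa [hGi j (Gi i) (hGimem i)] using this
    have h3 : μi i ((s ∩ Gi i) ∩ Gi j) ≤ μi j (s ∩ Gi j) :=
      le_trans (Measure.le_iff'.1 (hmono hij) _)
        (measure_mono (by intro x hx; exact ⟨hx.1.1, hx.2⟩))
    calc μi i (s ∩ Gi i) ≤ _ + _ := h1
      _ ≤ μi j (s ∩ Gi j) + 0 := add_le_add h3 h2.le
      _ = μi j (s ∩ Gi j) := add_zero _
  refine ⟨hm, le_antisymm ?_ ?_⟩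
  · -- ⨆ ≤ μ.restrict G
    refine iSup_le fun i => ?_
    rw [Measure.le_iff']
    intro s
    rw [Measure.restrict_apply' (hGimeas i), Measure.restrict_apply' hGmeas]
    have h1 : μi i (s ∩ Gi i) ≤ μi i ((s ∩ Gi i) ∩ G) + μi i ((s ∩ Gi i) \ G) :=
      measure_le_inter_add_diff _ _ _
    have h2 : μi i ((s ∩ Gi i) \ G) = 0 := by
      have : μi i ((s ∩ Gi i) \ G) ≤ μ (Gi i \ G) :=
        le_trans (measure_mono (Set.diff_subset_diff_left Set.inter_subset_right))
          (Measure.le_iff'.1 (hle i) _)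
      simpa [hG (Gi i) (hGimem i)] using this
    have h3 : μi i ((s ∩ Gi i) ∩ G) ≤ μ (s ∩ G) :=
      le_trans (Measure.le_iff'.1 (hle i) _)
        (measure_mono (by intro x hx; exact ⟨hx.1.1, hx.2⟩))
    calc μi i (s ∩ Gi i) ≤ _ + _ := h1
      _ ≤ μ (s ∩ G) + 0 := add_le_add h3 h2.le
      _ = μ (s ∩ G) := add_zero _
  · -- μ.restrict G ≤ ⨆
    set ν := ⨆ i, (μi i).restrict (Gi i) with hν
    have hμκ : μ ≤ ν + μ.restrict Gᶜ := by
      have key : (⨆ i, μi i) ≤ ν + μ.restrict Gᶜ := by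
        refine iSup_le fun i => ?_
        rw [Measure.le_iff']
        intro s
        have h1 : μi i s ≤ μi i (s ∩ Gi i) + μi i (s \ Gi i) :=
          measure_le_inter_add_diff _ _ _
        have h2 : μi i (s \ Gi i) ≤ μi i ((s \ Gi i) ∩ G) + μi i ((s \ Gi i) \ G) :=
          measure_le_inter_add_diff _ _ _
        have h3 : μi i ((s \ Gi i) ∩ G) = 0 := by
          have : μi i ((s \ Gi i) ∩ G) ≤ μi i (G \ Gi i) :=
            measure_mono (by intro x hx; exact ⟨hx.2, hx.1.2⟩)
          simpa [hGi i G hGmem] using this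
        have h4 : μi i ((s \ Gi i) \ G) ≤ (μ.restrict Gᶜ) s := by
          rw [Measure.restrict_apply' hGmeas.compl]
          refine le_trans ?_ (Measure.le_iff'.1 (hle i) _)
          exact measure_mono (by intro x hx; exact ⟨hx.1.1, hx.2⟩)
        have h5 : μi i (s ∩ Gi i) ≤ ν s := by
          have : (μi i).restrict (Gi i) ≤ ν := le_iSup (fun i => (μi i).restrict (Gi i)) i
          refine le_trans ?_ (Measure.le_iff'.1 this s)
          rw [Measure.restrict_apply' (hGimeas i)]
        calc μi i s ≤ μi i (s ∩ Gi i) + μi i (s \ Gi i) := h1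
          _ ≤ μi i (s ∩ Gi i) + (μi i ((s \ Gi i) ∩ G) + μi i ((s \ Gi i) \ G)) :=
              add_le_add_right h2 _
          _ ≤ ν s + (0 + (μ.restrict Gᶜ) s) :=
              add_le_add h5 (add_le_add h3.le h4)
          _ = (ν + μ.restrict Gᶜ) s := by simp
      exact le_trans (le_of_eq hμ) key
    calc μ.restrict G ≤ (ν + μ.restrict Gᶜ).restrict G :=
          Measure.restrict_mono le_rfl hμκ
      _ = ν.restrict G + (μ.restrict Gᶜ).restrict G := Measure.restrict_add _ _ _
      _ ≤ ν + 0 := by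
          refine add_le_add Measure.restrict_le_self (le_of_eq ?_)
          rw [Measure.restrict_restrict hGmeas]
          simp
      _ = ν := add_zero _
end

section
/- Let (Ω, ℱ) be a measurable space, μ a signed measure on (Ω, ℱ) with total variation measure |μ|, I a nonempty index set, and (𝒢^i)_{i ∈ I} a family where each 𝒢^i ⊆ ℱ is nonempty and closed under countable unions. Let ⋁_{i∈I} 𝒢^i := { ⋃_{i∈J} G_i : J ⊆ I nonempty countable, G_i ∈ 𝒢^i for each i ∈ J } (the smallest family closed under countable unions containing every 𝒢^i). If G_i is a 𝒢^i-atomic support of |μ| for each i ∈ I, and H is a (⋁_{i∈I} 𝒢^i)-atomic support of |μ|, then there exists a nonempty countable J ⊆ I such that H = ⋃_{i∈J} G_i up to a |μ|-null set, i.e. |μ|(H \ ⋃_{i∈J} G_i) = 0 and |μ|((⋃_{i∈J} G_i) \ H) = 0. -/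
open MeasureTheory

/-- The supremum of a family `(𝒢 i)` of families of sets: all countable unions
`⋃_{i ∈ J} G i`, over nonempty countable `J ⊆ I` and `G i ∈ 𝒢 i`. It is the smallest family
closed under countable unions containing every `𝒢 i`. -/
def familySup {Ω I : Type*} (𝒢 : I → Set (Set Ω)) : Set (Set Ω) :=
  {S | ∃ J : Set I, J.Nonempty ∧ J.Countable ∧
    ∃ g : I → Set Ω, (∀ i ∈ J, g i ∈ 𝒢 i) ∧ S = ⋃ i ∈ J, g i}

theorem atomic_support_of_familySup
    {Ω : Type*} [MeasurableSpace Ω] (μ : SignedMeasure Ω)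
    {I : Type*} [Nonempty I] (𝒢 : I → Set (Set Ω))
    (h𝒢meas : ∀ i, ∀ G ∈ 𝒢 i, MeasurableSet G) (h𝒢ne : ∀ i, (𝒢 i).Nonempty)
    (h𝒢union : ∀ i, ∀ G : ℕ → Set Ω, (∀ n, G n ∈ 𝒢 i) → (⋃ n, G n) ∈ 𝒢 i)
    (Gi : I → Set Ω) (hGimem : ∀ i, Gi i ∈ 𝒢 i)
    (hGi : ∀ i, ∀ G ∈ 𝒢 i, μ.totalVariation (G \ Gi i) = 0)
    (H : Set Ω) (hHmem : H ∈ familySup 𝒢)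
    (hH : ∀ S ∈ familySup 𝒢, μ.totalVariation (S \ H) = 0) :
    ∃ J : Set I, J.Nonempty ∧ J.Countable ∧
      μ.totalVariation (H \ ⋃ i ∈ J, Gi i) = 0 ∧
      μ.totalVariation ((⋃ i ∈ J, Gi i) \ H) = 0 := by
  obtain ⟨J, hJne, hJc, g, hg, hHeq⟩ := hHmem
  refine ⟨J, hJne, hJc, ?_, ?_⟩
  · have hsub : H \ ⋃ i ∈ J, Gi i ⊆ ⋃ i ∈ J, g i \ Gi i := by
      rw [hHeq]
      intro x hx
      obtain ⟨⟨_, ⟨i, rfl⟩, _, ⟨hi, rfl⟩, hxi⟩, hnx⟩ := hx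
      simp only [Set.mem_iUnion] at hnx ⊢
      exact ⟨i, hi, hxi, fun h => hnx ⟨i, hi, h⟩⟩
    refine measure_mono_null hsub ?_
    rw [measure_biUnion_null_iff hJc]
    exact fun i hi => hGi i (g i) (hg i hi)
  · exact hH _ ⟨J, hJne, hJc, Gi, fun i _ => hGimem i, rfl⟩
end

section
/- Let (Ω, ℱ) be a measurable space, μ a finite positive measure on (Ω, ℱ), I a nonempty index set, and (𝒢^i)_{i ∈ I} a family where each 𝒢^i ⊆ ℱ is nonempty and closed under countable unions. Let ⋁_{i∈I} 𝒢^i := { ⋃_{i∈J} G_i : J ⊆ I nonempty countable, G_i ∈ 𝒢^i for each i ∈ J } (the smallest family closed under countable unions containing every 𝒢^i). If G_i is a 𝒢^i-atomic support of μ for each i ∈ I, and H is a (⋁_{i∈I} 𝒢^i)-atomic support of μ, then the restriction of μ to H equals the supremum, in the lattice of measures ordered setwise, of the restrictions of μ to the G_i: μ(H ∩ ·) = ⋁_{i∈I} μ(G_i ∩ ·). -/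
open MeasureTheory

lemma restrict_iUnion_le_iSup {α : Type*} [MeasurableSpace α] (μ : Measure α)
    (s : ℕ → Set α) (hs : ∀ n, MeasurableSet (s n)) :
    μ.restrict (⋃ n, s n) ≤ ⨆ n, μ.restrict (s n) := by
  set t := disjointed s with ht_def
  have ht : ∀ n, MeasurableSet (t n) := MeasurableSet.disjointed hs
  have htd : Pairwise (Function.onFun Disjoint t) := disjoint_disjointed s
  rw [Measure.le_iff]
  intro F hF
  have hts : ∀ n, t n ⊆ s n := fun n => disjointed_subset s n
  have hU : (⋃ n, s n) = ⋃ n, t n := (iUnion_disjointed).symm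
  rw [Measure.restrict_apply hF, hU, Set.inter_iUnion]
  have hdisj : Pairwise (Function.onFun Disjoint fun n => F ∩ t n) := fun m n hmn =>
    (htd hmn).mono Set.inter_subset_right Set.inter_subset_right
  rw [measure_iUnion hdisj (fun n => hF.inter (ht n))]
  calc ∑' n, μ (F ∩ t n)
      ≤ ∑' n, (⨆ m, μ.restrict (s m)) (F ∩ t n) := by
        refine ENNReal.tsum_le_tsum fun n => ?_
        have h1 : μ (F ∩ t n) = (μ.restrict (s n)) (F ∩ t n) := by
          rw [Measure.restrict_apply (hF.inter (ht n))]
          congr 1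
          exact (Set.inter_eq_left.2 (Set.inter_subset_right.trans (hts n))).symm
        rw [h1]
        exact le_iSup (fun m => μ.restrict (s m)) n (F ∩ t n)
    _ = (⨆ m, μ.restrict (s m)) (⋃ n, F ∩ t n) :=
        (measure_iUnion hdisj (fun n => hF.inter (ht n))).symm
    _ ≤ (⨆ m, μ.restrict (s m)) F := by
        refine measure_mono ?_
        simp [Set.iUnion_inter, Set.inter_subset_left]

theorem atomic_part_of_familySup
    {Ω : Type*} [MeasurableSpace Ω] (μ : Measure Ω) [IsFiniteMeasure μ]
    {I : Type*} [Nonempty I] (𝒢 : I → Set (Set Ω))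
    (h𝒢meas : ∀ i, ∀ G ∈ 𝒢 i, MeasurableSet G) (h𝒢ne : ∀ i, (𝒢 i).Nonempty)
    (h𝒢union : ∀ i, ∀ G : ℕ → Set Ω, (∀ n, G n ∈ 𝒢 i) → (⋃ n, G n) ∈ 𝒢 i)
    (Gi : I → Set Ω) (hGimem : ∀ i, Gi i ∈ 𝒢 i)
    (hGi : ∀ i, ∀ G ∈ 𝒢 i, μ (G \ Gi i) = 0)
    (H : Set Ω) (hHmem : H ∈ familySup 𝒢)
    (hH : ∀ S ∈ familySup 𝒢, μ (S \ H) = 0) :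
    μ.restrict H = ⨆ i, μ.restrict (Gi i) := by
  refine le_antisymm ?_ ?_
  · obtain ⟨J, hJne, hJc, g, hg, rfl⟩ := hHmem
    obtain ⟨f, hf⟩ := hJc.exists_eq_range hJne
    have hfJ : ∀ n, f n ∈ J := fun n => hf ▸ Set.mem_range_self n
    have hHU : (⋃ i ∈ J, g i) = ⋃ n, g (f n) := by
      rw [hf, Set.biUnion_range]
    rw [hHU]
    calc μ.restrict (⋃ n, g (f n))
        ≤ ⨆ n, μ.restrict (g (f n)) :=
          restrict_iUnion_le_iSup μ _ (fun n => h𝒢meas _ _ (hg _ (hfJ n)))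
      _ ≤ ⨆ i, μ.restrict (Gi i) := by
          refine iSup_le fun n => ?_
          refine le_trans (Measure.restrict_mono'
            (MeasureTheory.ae_le_set.2 (hGi (f n) _ (hg _ (hfJ n)))) le_rfl) ?_
          exact le_iSup (fun i => μ.restrict (Gi i)) (f n)
  · refine iSup_le fun i => ?_
    have hmem : Gi i ∈ familySup 𝒢 := by
      refine ⟨{i}, Set.singleton_nonempty i, Set.countable_singleton i, Gi,
        fun j _ => hGimem j, by simp⟩
    exact Measure.restrict_mono' (MeasureTheory.ae_le_set.2 (hH _ hmem)) le_rfl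
end
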